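/- arXiv:2310.05982 — 12 statements merged into one kernel-verified Lean document; each statement's English description precedes it below -/
import Mathlib

section
/- Let F be a field, m, n natural numbers, and A an m×n matrix over F. Let C = χ · S, where S is the (m+n)×(m+n) symmetric block matrix [[0, A],[Aᵀ, 0]] with entries embedded into F(X), and χ is the diagonal matrix over F(X) with diagonal entries X^0, …, X^{m+n−1}. Then F(X)^{m+n} is the direct sum of the kernel and the image of the linear map v ↦ C·v: for every vector v over F(X) there exists a unique pair (u₁, u₂) with u₁ in the kernel of C, u₂ in the image of C, and v = u₁ + u₂. -/
/-!
Since `χ` is invertible, `ker C = ker S`, so a vector `w = C x` in `ker C ∩ im C` satisfies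
`S χ S x = 0`, and it suffices to show that this forces `S x = 0`. After clearing denominators `x`
is polynomial; put `u = S x`. Every coefficient vector of `u` lies in the image of `S` and every
coefficient vector of `χ u` in its kernel, and these are orthogonal for the dot product because
`S` is symmetric. The distinct powers `X ^ i` in `χ` make this pairing anisotropic, so `u = 0`.
Rank–nullity turns `ker C ∩ im C = 0` into the direct sum.
-/

open Matrix Polynomial

section FractionRing

variable {R K : Type*} [CommRing R] [CommRing K] [Algebra R K] [IsFractionRing R K]
  {m n p : Type*} [Fintype n]

theorem IsFractionRing.map_mulVec_eq_zero_of_mulVec_eq_zero (M : Matrix m n R)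
    (T : Matrix p n R) (h : ∀ w, M *ᵥ w = 0 → T *ᵥ w = 0) {v : n → K}
    (hv : M.map (algebraMap R K) *ᵥ v = 0) : T.map (algebraMap R K) *ᵥ v = 0 := by
  obtain ⟨d, hd⟩ := IsLocalization.exist_integer_multiples_of_finite (nonZeroDivisors R) v
  choose w hw using hd
  have hwv : (algebraMap R K) ∘ w = (d : R) • v := funext hw
  have hMw : M *ᵥ w = 0 := funext fun i => IsFractionRing.injective R K <| by
    rw [Pi.zero_apply, map_zero, RingHom.map_mulVec, hwv, mulVec_smul, hv, smul_zero,
      Pi.zero_apply]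
  have hTv : (d : R) • T.map (algebraMap R K) *ᵥ v = 0 := by
    rw [← mulVec_smul, ← hwv]
    funext i
    rw [← RingHom.map_mulVec, h w hMw, Pi.zero_apply, Pi.zero_apply, map_zero]
  funext i
  have := congrFun hTv i
  rw [Pi.smul_apply, Algebra.smul_def] at this
  exact (IsLocalization.map_units K d).mul_right_eq_zero.mp this

end FractionRing

section Polynomial

variable {R : Type*} [CommSemiring R]

theorem Polynomial.coeff_map_C_mulVec {m n : Type*} [Fintype n] (M : Matrix m n R)
    (v : n → R[X]) (i : m) (l : ℕ) :
    ((M.map C *ᵥ v) i).coeff l = (M *ᵥ fun j => (v j).coeff l) i := by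
  simp [mulVec, dotProduct, finsetSum_coeff, coeff_C_mul]

variable {N : ℕ}

-- Pick the lowest degree `ν` occurring in `u` and the first index `i₀` at which it occurs: in
-- the pairing of degree `ν` with degree `ν + i₀`, only the term `(u i₀).coeff ν ^ 2` survives.
theorem Polynomial.eq_zero_of_coeff_dotProduct_X_pow_mul_coeff_eq_zero [NoZeroDivisors R]
    (u : Fin N → R[X])
    (h : ∀ l k, (fun i => (u i).coeff l) ⬝ᵥ (fun i => (X ^ (i : ℕ) * u i).coeff k) = 0) :
    u = 0 := by
  by_contra hu
  obtain ⟨ν, ⟨i', hi'⟩, hν⟩ := wellFounded_lt.has_min {l : ℕ | ∃ i, (u i).coeff l ≠ 0} <| by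
    obtain ⟨i, hi⟩ := Function.ne_iff.mp hu
    exact ⟨(u i).natTrailingDegree, i, trailingCoeff_nonzero_iff_nonzero.mpr hi⟩
  obtain ⟨i₀, hi₀, hi₀min⟩ := wellFounded_lt.has_min {i : Fin N | (u i).coeff ν ≠ 0} ⟨i', hi'⟩
  have hsum := h ν (ν + i₀)
  rw [dotProduct, Finset.sum_eq_single i₀] at hsum
  · rw [coeff_X_pow_mul', if_pos (by omega), Nat.add_sub_cancel] at hsum
    exact hi₀ (mul_self_eq_zero.mp hsum)
  · intro j _ hj
    rcases lt_or_gt_of_ne hj with hlt | hgt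
    · rw [not_not.mp (hi₀min j · hlt), zero_mul]
    · rw [coeff_X_pow_mul']
      split_ifs
      · rw [not_not.mp fun hne => hν (ν + i₀ - j) ⟨j, hne⟩ (by omega), mul_zero]
      · exact mul_zero _
  · exact fun hi₀univ => (hi₀univ (Finset.mem_univ i₀)).elim

theorem Matrix.IsSymm.map_C_mulVec_eq_zero_of_mul_diagonal_mul [NoZeroDivisors R]
    {S : Matrix (Fin N) (Fin N) R} (hS : S.IsSymm) {v : Fin N → R[X]}
    (h : (S.map C * diagonal (fun i : Fin N => (X : R[X]) ^ (i : ℕ)) * S.map C) *ᵥ v = 0) :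
    S.map C *ᵥ v = 0 := by
  set u := S.map C *ᵥ v
  refine eq_zero_of_coeff_dotProduct_X_pow_mul_coeff_eq_zero u fun l k => ?_
  have hu : (fun i => (u i).coeff l) = S *ᵥ fun j => (v j).coeff l :=
    funext fun i => coeff_map_C_mulVec S v i l
  have hker : (S *ᵥ fun i => (X ^ (i : ℕ) * u i).coeff k) = 0 := by
    have hdiag :
        (fun i : Fin N => X ^ (i : ℕ) * u i) = diagonal (fun i : Fin N => X ^ (i : ℕ)) *ᵥ u :=
      funext fun i => (mulVec_diagonal (fun i : Fin N => (X : R[X]) ^ (i : ℕ)) u i).symm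
    funext i
    rw [← coeff_map_C_mulVec, hdiag, mulVec_mulVec, mulVec_mulVec, h]
    rfl
  rw [hu, ← hS.eq, mulVec_transpose, ← dotProduct_mulVec, hker, dotProduct_zero]

end Polynomial

theorem Matrix.IsSymm.map_algebraMap_ratFunc_mulVec_eq_zero_of_mul_diagonal_mul {K : Type*}
    [CommRing K] [IsDomain K] {N : ℕ} {S : Matrix (Fin N) (Fin N) K} (hS : S.IsSymm)
    {v : Fin N → RatFunc K}
    (h : (S.map (algebraMap K (RatFunc K)) * diagonal (fun i : Fin N => RatFunc.X ^ (i : ℕ)) *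
      S.map (algebraMap K (RatFunc K))) *ᵥ v = 0) :
    S.map (algebraMap K (RatFunc K)) *ᵥ v = 0 := by
  have hS' : S.map (algebraMap K (RatFunc K)) = (S.map C).map (algebraMap K[X] (RatFunc K)) := by
    rw [Matrix.map_map]
    rfl
  have hχ : diagonal (fun i : Fin N => (RatFunc.X : RatFunc K) ^ (i : ℕ)) =
      (diagonal fun i : Fin N => (X : K[X]) ^ (i : ℕ)).map (algebraMap K[X] (RatFunc K)) := by
    simp [diagonal_map, RatFunc.algebraMap_X]
  rw [hS', hχ, ← Matrix.map_mul, ← Matrix.map_mul] at h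
  rw [hS']
  exact IsFractionRing.map_mulVec_eq_zero_of_mulVec_eq_zero _ _
    (fun _ => hS.map_C_mulVec_eq_zero_of_mul_diagonal_mul) h

theorem Matrix.disjoint_ker_range_mulVecLin_mul {R n : Type*} [CommRing R] [Fintype n]
    [DecidableEq n] {D S : Matrix n n R} (hD : ∀ w, D *ᵥ w = 0 → w = 0)
    (hS : ∀ v, (S * D * S) *ᵥ v = 0 → S *ᵥ v = 0) :
    Disjoint (LinearMap.ker (D * S).mulVecLin) (LinearMap.range (D * S).mulVecLin) := by
  rw [Submodule.disjoint_def]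
  rintro _ hker ⟨x, rfl⟩
  simp only [LinearMap.mem_ker, mulVecLin_apply, ← mulVec_mulVec] at hker ⊢
  have hSx : S *ᵥ x = 0 := hS x (by simpa only [← mulVec_mulVec] using hD _ hker)
  rw [hSx, mulVec_zero]

theorem LinearMap.isCompl_ker_range_of_disjoint {K V : Type*} [DivisionRing K] [AddCommGroup V]
    [Module K V] [FiniteDimensional K V] {f : V →ₗ[K] V}
    (h : Disjoint (LinearMap.ker f) (LinearMap.range f)) :
    IsCompl (LinearMap.ker f) (LinearMap.range f) :=
  (Submodule.isCompl_iff_disjoint _ _ (by rw [← f.finrank_range_add_finrank_ker, add_comm])).mpr h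

theorem Submodule.existsUnique_mem_mem_eq_add_of_isCompl {R E : Type*} [Ring R] [AddCommGroup E]
    [Module R E] {p q : Submodule R E} (h : IsCompl p q) (v : E) :
    ∃! u : E × E, u.1 ∈ p ∧ u.2 ∈ q ∧ v = u.1 + u.2 := by
  obtain ⟨a, b, hab, huniq⟩ := existsUnique_add_of_isCompl h v
  refine ⟨(a, b), ⟨a.2, b.2, hab.symm⟩, ?_⟩
  rintro ⟨x, y⟩ ⟨hx, hy, hv⟩
  obtain ⟨rfl, rfl⟩ := huniq ⟨x, hx⟩ ⟨y, hy⟩ hv.symm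
  rfl

/-- `F(X)^{m+n}` is the direct sum of the kernel and the image of `C = χ * S`:
every vector decomposes uniquely as a sum of a kernel element and an image element. -/
theorem mulmuley_ker_im_direct_sum (F : Type*) [Field F] (m n : ℕ)
    (A : Matrix (Fin m) (Fin n) F)
    (S : Matrix (Fin (m + n)) (Fin (m + n)) (RatFunc F))
    (hS : S = Matrix.reindex finSumFinEquiv finSumFinEquiv
      ((Matrix.fromBlocks 0 A Aᵀ 0).map (algebraMap F (RatFunc F))))
    (χ : Matrix (Fin (m + n)) (Fin (m + n)) (RatFunc F))
    (hχ : χ = Matrix.diagonal (fun i : Fin (m + n) => (RatFunc.X : RatFunc F) ^ (i : ℕ)))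
    (C : Matrix (Fin (m + n)) (Fin (m + n)) (RatFunc F))
    (hC : C = χ * S) :
    ∀ v : Fin (m + n) → RatFunc F,
      ∃! u : (Fin (m + n) → RatFunc F) × (Fin (m + n) → RatFunc F),
        u.1 ∈ LinearMap.ker C.mulVecLin ∧ u.2 ∈ LinearMap.range C.mulVecLin ∧
          v = u.1 + u.2 := by
  set S₀ := reindex finSumFinEquiv finSumFinEquiv (fromBlocks 0 A Aᵀ 0)
  have hS₀ : S₀.IsSymm := (isSymm_zero.fromBlocks rfl isSymm_zero).reindex _
  have hSS₀ : S = S₀.map (algebraMap F (RatFunc F)) := hS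
  have hχ_ker : ∀ w, χ *ᵥ w = 0 → w = 0 := fun w hw => funext fun i => by
    have := congrFun hw i
    rw [hχ, mulVec_diagonal] at this
    exact (mul_eq_zero.mp this).resolve_left (pow_ne_zero _ RatFunc.X_ne_zero)
  have hdisj := disjoint_ker_range_mulVecLin_mul (S := S) hχ_ker fun v hv => by
    rw [hSS₀] at hv ⊢
    exact hS₀.map_algebraMap_ratFunc_mulVec_eq_zero_of_mul_diagonal_mul (hχ ▸ hv)
  rw [hC]
  exact Submodule.existsUnique_mem_mem_eq_add_of_isCompl
    (LinearMap.isCompl_ker_range_of_disjoint hdisj)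
end

section
/- Let K be a field and M an N×N matrix over K. If the kernel and the image of the linear map v ↦ M·v intersect trivially (their intersection is the zero submodule), then the multiplicity of 0 as a root of the characteristic polynomial of M equals the dimension of the kernel of M. -/
namespace Module.End

variable {R M : Type*} [CommRing R] [AddCommGroup M] [Module R M]

/-- If `f ^ (n + 1)` kills `x`, then `f ^ n` kills `f x`, so by induction `f (f x) = 0`;
thus `f x` lies in both the kernel and the range of `f`. -/
theorem ker_pow_le_ker_of_disjoint_ker_range {f : End R M}
    (h : Disjoint (LinearMap.ker f) (LinearMap.range f)) (n : ℕ) :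
    LinearMap.ker (f ^ n) ≤ LinearMap.ker f := by
  induction n with
  | zero =>
    intro x hx
    rw [LinearMap.mem_ker, pow_zero, one_apply] at hx
    simp [hx]
  | succ n ih =>
    intro x hx
    have hfx_ker : f x ∈ LinearMap.ker f :=
      ih (by rwa [LinearMap.mem_ker, ← mul_apply, ← pow_succ])
    exact h.le_bot ⟨hfx_ker, LinearMap.mem_range_self f x⟩

theorem maxGenEigenspace_zero_eq_ker_of_disjoint_ker_range {f : End R M}
    (h : Disjoint (LinearMap.ker f) (LinearMap.range f)) :
    f.maxGenEigenspace 0 = LinearMap.ker f := by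
  refine le_antisymm (fun x hx => ?_) ?_
  · obtain ⟨k, hk⟩ := (f.mem_maxGenEigenspace 0 x).mp hx
    rw [zero_smul, sub_zero] at hk
    exact ker_pow_le_ker_of_disjoint_ker_range h k hk
  · rw [← f.eigenspace_zero]
    exact f.genEigenspace_le_maximal 0 1

end Module.End

/-- If the kernel and the image of a square matrix `M` intersect trivially, then the
multiplicity of `0` as a root of the characteristic polynomial of `M` equals the
dimension of the kernel of `M`. -/
theorem rootMultiplicity_charpoly_eq_finrank_ker (K : Type*) [Field K] (N : ℕ)
    (M : Matrix (Fin N) (Fin N) K)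
    (h : LinearMap.ker M.mulVecLin ⊓ LinearMap.range M.mulVecLin = ⊥) :
    Polynomial.rootMultiplicity 0 M.charpoly =
      Module.finrank K (LinearMap.ker M.mulVecLin) := by
  rw [← Module.End.maxGenEigenspace_zero_eq_ker_of_disjoint_ker_range (disjoint_iff.mpr h),
    LinearMap.finrank_maxGenEigenspace_eq, Matrix.charpoly_mulVecLin]
end

section
/- Let F be a field, m, n natural numbers, A an m×n matrix over F, and b a vector in F^m. Let C = χ · S, where S is the (m+n)×(m+n) block matrix [[0, A],[Aᵀ, 0]] with entries embedded into F(X), and χ is the diagonal matrix over F(X) with diagonal entries X^0, …, X^{m+n−1}. Let s be the multiplicity of 0 as a root of the characteristic polynomial p_C of C, and let q = p_C / Y^s (the quotient of p_C on dividing by the monic polynomial Y^s). Let b̃ be the vector in F(X)^{m+n} whose first m entries are the images of the entries of b in F(X) and whose remaining n entries are 0. Then the linear system A·x = b has a solution x ∈ F^n if and only if q(C)·(χ·b̃) = 0, where q(C) denotes the evaluation of the polynomial q at the matrix C. -/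
/-!
Write `S₀ = [[0, A], [Aᵀ, 0]]`, a symmetric matrix over `F`. The heart of the matter is that
`C = χ S₀` satisfies `ker C² = ker C`. Since `χ` is invertible this amounts to: `S₀ χ S₀ v = 0`
implies `S₀ v = 0`. Clear denominators so that `v` is polynomial, put `p = S₀ v`, and substitute
`X ↦ X ^ k` in one copy of `p`: by symmetry of `S₀`,
`∑ᵢ pᵢ(X ^ k) Xⁱ pᵢ(X) = v(X ^ k)ᵀ S₀ χ S₀ v = 0`, while the nonzero summands have the pairwise
distinct degrees `(k + 1) deg pᵢ + i`; hence `p = 0`. The two "independent" copies of `p` replace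
the positivity argument available over ordered fields.

For any matrix with `ker C² = ker C`, writing `p_C = Y ^ s q` with `q(0) ≠ 0`, the kernel of `q(C)`
is the range of `C` (Bézout for `Y ^ (s + 1)` and `q`). So `q(C) (χ b̃) = 0` iff `S₀ w = b̃` is
solvable over `F(X)`, i.e. iff `A x = b` is solvable over `F(X)`, and then also over `F`: apply an
`F`-linear retraction `F(X) → F` of the inclusion to the solution.
-/

open Matrix Polynomial

open scoped Function in
theorem Polynomial.eq_zero_of_sum_expand_mul_X_pow_mul_eq_zero {R : Type*} [CommRing R]
    [IsDomain R] {k : ℕ} (p : Fin k → R[X])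
    (h : ∑ i, expand R k (p i) * X ^ (i : ℕ) * p i = 0) : p = 0 := by
  set f : Fin k → R[X] := fun i => expand R k (p i) * X ^ (i : ℕ) * p i
  have hk (i : Fin k) : 0 < k := i.pos
  have hf_eq_zero (i : Fin k) : f i = 0 ↔ p i = 0 := by
    simp [f, expand_eq_zero (hk i), X_ne_zero]
  -- the degree `(k + 1) * deg p i + i` of `f i` determines `i`, since `i < k + 1`
  have hdeg (i : Fin k) (hi : p i ≠ 0) : (f i).natDegree = (k + 1) * (p i).natDegree + i := by
    rw [natDegree_mul (by simp [expand_eq_zero (hk i), hi, X_ne_zero]) hi, natDegree_mul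
      (by simp [expand_eq_zero (hk i), hi]) (by simp [X_ne_zero]), natDegree_expand,
      natDegree_X_pow]
    ring
  have hdisj : Set.Pairwise {i | i ∈ Finset.univ ∧ f i ≠ 0} (Ne on degree ∘ f) := by
    rintro i ⟨-, hi⟩ j ⟨-, hj⟩ hij hdeg_eq
    rw [Ne, hf_eq_zero] at hi hj
    simp only [Function.comp_apply, degree_eq_natDegree ((hf_eq_zero i).not.mpr hi),
      degree_eq_natDegree ((hf_eq_zero j).not.mpr hj), Nat.cast_inj, hdeg i hi, hdeg j hj]
      at hdeg_eq
    have := congrArg (· % (k + 1)) hdeg_eq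
    simp only [Nat.mul_add_mod, Nat.mod_eq_of_lt (Nat.lt_succ_of_lt i.isLt),
      Nat.mod_eq_of_lt (Nat.lt_succ_of_lt j.isLt)] at this
    exact hij (Fin.ext this)
  have hsup := degree_sum_eq_of_disjoint f Finset.univ hdisj
  rw [h, degree_zero, eq_comm, Finset.sup_eq_bot_iff] at hsup
  funext i
  exact (hf_eq_zero i).mp (degree_eq_bot.mp (hsup i (Finset.mem_univ i)))

theorem Matrix.IsSymm.map_C_mulVec_eq_zero_of_mulVec_diagonal_mulVec_eq_zero {R : Type*}
    [CommRing R] [IsDomain R] {k : ℕ} {S : Matrix (Fin k) (Fin k) R} (hS : S.IsSymm)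
    (g : Fin k → R[X])
    (h : S.map C *ᵥ diagonal (fun i : Fin k => (X : R[X]) ^ (i : ℕ)) *ᵥ S.map C *ᵥ g = 0) :
    S.map C *ᵥ g = 0 := by
  set p := S.map C *ᵥ g
  set φ : R[X] →+* R[X] := (expand R k : R[X] →+* R[X])
  have hφp : φ ∘ p = S.map C *ᵥ (φ ∘ g) := by
    funext i
    rw [Function.comp_apply, RingHom.map_mulVec, Matrix.map_map]
    congr 2
    ext a
    simp [φ]
  apply eq_zero_of_sum_expand_mul_X_pow_mul_eq_zero
  calc ∑ i, expand R k (p i) * X ^ (i : ℕ) * p i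
      = (φ ∘ p) ⬝ᵥ (diagonal (fun i : Fin k => (X : R[X]) ^ (i : ℕ)) *ᵥ p) := by
        simp only [dotProduct, mulVec_diagonal, mul_assoc]; rfl
    _ = (φ ∘ g) ⬝ᵥ (S.map C *ᵥ diagonal (fun i : Fin k => (X : R[X]) ^ (i : ℕ)) *ᵥ p) := by
        rw [hφp, dotProduct_mulVec (φ ∘ g), ← mulVec_transpose, (hS.map C).eq]
    _ = 0 := by rw [h, dotProduct_zero]

theorem Matrix.IsSymm.map_algebraMap_mulVec_eq_zero_of_mulVec_diagonal_mulVec_eq_zero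
    {R : Type*} [CommRing R] [IsDomain R] {k : ℕ} {S : Matrix (Fin k) (Fin k) R} (hS : S.IsSymm)
    (v : Fin k → RatFunc R)
    (h : S.map (algebraMap R (RatFunc R)) *ᵥ
      diagonal (fun i : Fin k => (RatFunc.X : RatFunc R) ^ (i : ℕ)) *ᵥ
        S.map (algebraMap R (RatFunc R)) *ᵥ v = 0) :
    S.map (algebraMap R (RatFunc R)) *ᵥ v = 0 := by
  set ι := algebraMap R[X] (RatFunc R)
  obtain ⟨⟨d, hd⟩, hdv⟩ := IsLocalization.exist_integer_multiples_of_finite (nonZeroDivisors R[X]) v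
  choose g hg using hdv
  have hgv : ι ∘ g = d • v := funext hg
  have hι (M : Matrix (Fin k) (Fin k) R[X]) (u : Fin k → R[X]) :
      ι ∘ (M *ᵥ u) = M.map ι *ᵥ (ι ∘ u) :=
    funext (RingHom.map_mulVec ι M u)
  have hS' : (S.map C).map ⇑ι = S.map (algebraMap R (RatFunc R)) := by
    rw [Matrix.map_map]
    exact congrArg S.map (funext RatFunc.algebraMap_C)
  have hχ : (diagonal fun i : Fin k => (X : R[X]) ^ (i : ℕ)).map ⇑ι =
      diagonal fun i : Fin k => (RatFunc.X : RatFunc R) ^ (i : ℕ) := by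
    simp [ι, diagonal_map, RatFunc.algebraMap_X]
  have hSg : S.map C *ᵥ g = 0 := by
    refine hS.map_C_mulVec_eq_zero_of_mulVec_diagonal_mulVec_eq_zero g ?_
    refine (RatFunc.algebraMap_injective R).comp_left (?_ : ι ∘ _ = ι ∘ (0 : Fin k → R[X]))
    rw [hι, hι, hι, hS', hχ, hgv, mulVec_smul, mulVec_smul, mulVec_smul, h]
    simp
  have hdSv : d • (S.map (algebraMap R (RatFunc R)) *ᵥ v) = 0 := by
    rw [← mulVec_smul, ← hgv, ← hS', ← hι, hSg]
    simp
  exact (smul_eq_zero.mp hdSv).resolve_left (nonZeroDivisors.ne_zero hd)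

theorem Matrix.mulVec_eq_zero_of_pow_mulVec_eq_zero {R ι : Type*} [Semiring R] [Fintype ι]
    [DecidableEq ι] {C : Matrix ι ι R} (hC : ∀ y, C *ᵥ C *ᵥ y = 0 → C *ᵥ y = 0) (t : ℕ)
    {y : ι → R} (hy : C ^ t *ᵥ y = 0) : C *ᵥ y = 0 := by
  induction t generalizing y with
  | zero => rw [pow_zero, one_mulVec] at hy; rw [hy, mulVec_zero]
  | succ t ih => rw [pow_succ, ← mulVec_mulVec] at hy; exact hC y (ih hy)

theorem Matrix.aeval_divByMonic_X_pow_rootMultiplicity_mulVec_eq_zero_iff {K ι : Type*} [Field K]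
    [Fintype ι] [DecidableEq ι] {C : Matrix ι ι K}
    (hC : ∀ y, C *ᵥ C *ᵥ y = 0 → C *ᵥ y = 0) {P : K[X]} (hP : aeval C P = 0) (hP0 : P ≠ 0)
    (v : ι → K) :
    aeval C (P /ₘ X ^ rootMultiplicity 0 P) *ᵥ v = 0 ↔ ∃ w, C *ᵥ w = v := by
  set s := rootMultiplicity 0 P
  set q := P /ₘ X ^ s
  have hPq : X ^ s * q = P := by
    simpa using pow_mul_divByMonic_rootMultiplicity_eq P 0
  have hq0 : ¬ X ∣ q := by
    rw [X_dvd_iff, coeff_zero_eq_eval_zero]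
    simpa using eval_divByMonic_pow_rootMultiplicity_ne_zero 0 hP0
  constructor
  · intro hv
    obtain ⟨u, u', huu'⟩ := ((irreducible_X.coprime_iff_not_dvd).mpr hq0).pow_left (m := s + 1)
    have hsplit : C * aeval C (X ^ s * u) + aeval C u' * aeval C q = 1 := by
      have h := congrArg (aeval C) (show X * (X ^ s * u) + u' * q = 1 by linear_combination huu')
      rwa [map_add, map_mul (aeval C) X, map_mul (aeval C) u', aeval_X, map_one] at h
    refine ⟨aeval C (X ^ s * u) *ᵥ v, ?_⟩
    calc C *ᵥ aeval C (X ^ s * u) *ᵥ v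
        = (C * aeval C (X ^ s * u) + aeval C u' * aeval C q) *ᵥ v := by
          rw [add_mulVec, ← mulVec_mulVec, ← mulVec_mulVec, hv, mulVec_zero, add_zero]
      _ = v := by rw [hsplit, one_mulVec]
  · rintro ⟨w, rfl⟩
    have hqC : aeval C q * C = C * aeval C q := by
      simpa using ((Commute.all q X).map (aeval C)).eq
    rw [mulVec_mulVec, hqC, ← mulVec_mulVec]
    refine mulVec_eq_zero_of_pow_mulVec_eq_zero hC s ?_
    rw [mulVec_mulVec, ← aeval_X_pow (R := K), ← map_mul, hPq, hP, zero_mulVec]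

theorem Matrix.exists_reindex_fromBlocks_mulVec_eq_append_iff {R : Type*} [Semiring R] {m n : ℕ}
    (A : Matrix (Fin m) (Fin n) R) (b : Fin m → R) :
    (∃ w, reindex finSumFinEquiv finSumFinEquiv (fromBlocks 0 A Aᵀ 0) *ᵥ w = Fin.append b 0) ↔
      ∃ x, A *ᵥ x = b := by
  set e : Fin m ⊕ Fin n ≃ Fin (m + n) := finSumFinEquiv
  have hb : Fin.append b 0 ∘ e = Sum.elim b 0 := Fin.append_comp_sumElim
  have hw (w : Fin (m + n) → R) : reindex e e (fromBlocks 0 A Aᵀ 0) *ᵥ w = Fin.append b 0 ↔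
      A *ᵥ ((w ∘ e) ∘ Sum.inr) = b ∧ Aᵀ *ᵥ ((w ∘ e) ∘ Sum.inl) = 0 := by
    rw [reindex_apply, submatrix_mulVec_equiv, Equiv.symm_symm, Equiv.comp_symm_eq, hb,
      ← Sum.elim_comp_inl_inr (w ∘ e), fromBlocks_mulVec, Sum.elim_eq_iff]
    simp only [zero_mulVec, zero_add, add_zero, Sum.elim_comp_inl, Sum.elim_comp_inr]
  simp only [hw]
  constructor
  · rintro ⟨w, hAw, -⟩
    exact ⟨_, hAw⟩
  · rintro ⟨x, hx⟩
    refine ⟨Sum.elim 0 x ∘ e.symm, ?_⟩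
    simp [Function.comp_def, hx, ← Pi.zero_def]

theorem Matrix.exists_map_mulVec_eq_iff {F K : Type*} [Field F] [Ring K] [Nontrivial K]
    [Algebra F K] {m n : Type*} [Fintype n] (A : Matrix m n F) (b : m → F) :
    (∃ x, A.map (algebraMap F K) *ᵥ x = algebraMap F K ∘ b) ↔ ∃ x, A *ᵥ x = b := by
  constructor
  · rintro ⟨x, hx⟩
    obtain ⟨π, hπ⟩ := Module.Projective.exists_dual_eq_one F (one_ne_zero : (1 : K) ≠ 0)
    refine ⟨π ∘ x, funext fun i => ?_⟩
    have := congrArg π (congrFun hx i)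
    simpa [mulVec, dotProduct, ← Algebra.smul_def, Algebra.algebraMap_eq_smul_one, hπ] using this
  · rintro ⟨x, rfl⟩
    exact ⟨algebraMap F K ∘ x, funext fun i => (RingHom.map_mulVec _ A x i).symm⟩

/-- Solvability of the linear system `A · x = b` is equivalent to `q(C) · (χ · b̃) = 0`,
where `C = χ · S`, `p_C` is the characteristic polynomial of `C`, `s` is the multiplicity
of `0` as a root of `p_C`, and `q = p_C /ₘ Y^s`. -/
theorem mulmuley_solvability (F : Type*) [Field F] (m n : ℕ)
    (A : Matrix (Fin m) (Fin n) F) (b : Fin m → F)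
    (S : Matrix (Fin (m + n)) (Fin (m + n)) (RatFunc F))
    (hS : S = Matrix.reindex finSumFinEquiv finSumFinEquiv
      ((Matrix.fromBlocks 0 A Aᵀ 0).map (algebraMap F (RatFunc F))))
    (χ : Matrix (Fin (m + n)) (Fin (m + n)) (RatFunc F))
    (hχ : χ = Matrix.diagonal (fun i : Fin (m + n) => (RatFunc.X : RatFunc F) ^ (i : ℕ)))
    (C : Matrix (Fin (m + n)) (Fin (m + n)) (RatFunc F))
    (hC : C = χ * S)
    (s : ℕ) (hs : s = Polynomial.rootMultiplicity 0 C.charpoly)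
    (q : Polynomial (RatFunc F)) (hq : q = C.charpoly /ₘ Polynomial.X ^ s)
    (btilde : Fin (m + n) → RatFunc F)
    (hb : btilde = Fin.append (fun i => algebraMap F (RatFunc F) (b i))
      (0 : Fin n → RatFunc F)) :
    (∃ x : Fin n → F, A.mulVec x = b) ↔
      (Polynomial.aeval C q).mulVec (χ.mulVec btilde) = 0 := by
  set ι := algebraMap F (RatFunc F)
  have hS₀ : (reindex finSumFinEquiv finSumFinEquiv (fromBlocks 0 A Aᵀ 0)).IsSymm :=
    (IsSymm.fromBlocks isSymm_zero rfl isSymm_zero).submatrix _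
  have hS' : S = (reindex finSumFinEquiv finSumFinEquiv (fromBlocks 0 A Aᵀ 0)).map ι := by
    rw [hS, reindex_apply, reindex_apply, submatrix_map]
  have hχ_inj : Function.Injective (χ *ᵥ ·) := by
    rw [hχ]
    exact mulVec_injective_of_isUnit (isUnit_diagonal.mpr
      (Pi.isUnit_iff.mpr fun i => (pow_ne_zero _ RatFunc.X_ne_zero).isUnit))
  have hker (y : Fin (m + n) → RatFunc F) (hy : C *ᵥ C *ᵥ y = 0) : C *ᵥ y = 0 := by
    rw [hC, ← mulVec_mulVec, ← mulVec_mulVec, ← mulVec_zero χ, hχ_inj.eq_iff, hS', hχ] at hy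
    rw [hC, ← mulVec_mulVec, hS',
      hS₀.map_algebraMap_mulVec_eq_zero_of_mulVec_diagonal_mulVec_eq_zero y hy, mulVec_zero]
  rw [hq, hs, aeval_divByMonic_X_pow_rootMultiplicity_mulVec_eq_zero_iff hker
    (aeval_self_charpoly C) (charpoly_monic C).ne_zero]
  simp_rw [hC, ← mulVec_mulVec, hχ_inj.eq_iff]
  rw [hS, hb, fromBlocks_map, Matrix.map_zero _ (map_zero ι), Matrix.map_zero _ (map_zero ι),
    transpose_map, exists_reindex_fromBlocks_mulVec_eq_append_iff]
  exact (exists_map_mulVec_eq_iff A b).symm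
end

section
/- Let F be a field, N a natural number, and u₀, …, u_{N−1} polynomials in F[X]. Regard F[X][Y] as polynomials in a second variable Y with coefficients in F[X], and for each i let uᵢ(Y) denote uᵢ with its variable renamed to Y (the image of uᵢ under the map of polynomials induced by the constant embedding F → F[X]). If the bivariate polynomial ∑_{i=0}^{N−1} uᵢ(Y) · X^i · uᵢ(X) is the zero element of F[X][Y] (where X^i · uᵢ(X) ∈ F[X] is viewed as a constant in Y), then uᵢ = 0 for every i. -/
/-!
Let `i₀` be the index with `uᵢ₀ ≠ 0` maximising `i + deg uᵢ`, ties broken towards the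
smallest `i`, and put `k = deg uᵢ₀`. In the coefficient of `Y^k X^(i₀ + k)` of the sum, every
other index contributes `0`: either `X^i uᵢ` has degree below `i₀ + k`, or it ties and then
`i > i₀` forces `deg uᵢ < k`. What is left is the square of the leading coefficient of `uᵢ₀`,
which is nonzero.
-/

open Polynomial

namespace Polynomial

variable {R ι : Type*} [Semiring R]

def shiftedDegreeKey (a : ℕ) (p : R[X]) : Lex (ℕ × ℕᵒᵈ) :=
  toLex (a + p.natDegree, OrderDual.toDual a)

theorem coeff_coeff_map_C_mul_C (p q : R[X]) (k n : ℕ) :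
    ((p.map C * C q).coeff k).coeff n = p.coeff k * q.coeff n := by
  rw [coeff_mul_C, coeff_map, coeff_C_mul]

theorem coeff_natDegree_mul_coeff_X_pow_mul_eq_zero {u v : R[X]} {a b : ℕ}
    (h : shiftedDegreeKey b v < shiftedDegreeKey a u) :
    v.coeff u.natDegree * (X ^ b * v).coeff (a + u.natDegree) = 0 := by
  rcases Prod.Lex.lt_iff.mp h with hdeg | ⟨hdeg, hab⟩
  · change b + v.natDegree < a + u.natDegree at hdeg
    have : (X ^ b * v).natDegree < a + u.natDegree := by
      have := natDegree_X_pow_le (R := R) b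
      have := natDegree_mul_le (p := X ^ b) (q := v)
      omega
    rw [coeff_eq_zero_of_natDegree_lt this, mul_zero]
  · change b + v.natDegree = a + u.natDegree at hdeg
    change a < b at hab
    rw [coeff_eq_zero_of_natDegree_lt (by omega : v.natDegree < u.natDegree), zero_mul]

theorem eq_zero_of_sum_map_C_mul_C_X_pow_mul_eq_zero [NoZeroDivisors R] {s : Finset ι}
    {e : ι → ℕ} (he : Function.Injective e) {u : ι → R[X]}
    (h : ∑ i ∈ s, (u i).map C * C (X ^ e i * u i) = 0) : ∀ i ∈ s, u i = 0 := by
  classical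
  by_contra! hne
  obtain ⟨i₀, hi₀, hmax⟩ := Finset.exists_max_image (s.filter fun i => u i ≠ 0)
    (fun i => shiftedDegreeKey (e i) (u i)) (by simpa [Finset.filter_nonempty_iff])
  rw [Finset.mem_filter] at hi₀
  set k := (u i₀).natDegree
  have hcoeff := congrArg (fun P : R[X][X] => (P.coeff k).coeff (e i₀ + k)) h
  simp only [finsetSum_coeff, coeff_coeff_map_C_mul_C, coeff_zero] at hcoeff
  rw [Finset.sum_eq_single_of_mem i₀ hi₀.1] at hcoeff
  · rw [add_comm, coeff_X_pow_mul] at hcoeff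
    exact leadingCoeff_ne_zero.mpr hi₀.2 (mul_self_eq_zero.mp hcoeff)
  · intro i hi hii₀
    by_cases hui : u i = 0
    · simp [hui]
    refine coeff_natDegree_mul_coeff_X_pow_mul_eq_zero
      ((hmax i (Finset.mem_filter.mpr ⟨hi, hui⟩)).lt_of_ne fun heq => hii₀ (he ?_))
    exact congrArg (fun p : Lex (ℕ × ℕᵒᵈ) => OrderDual.ofDual (ofLex p).2) heq

end Polynomial

/-- If `∑ i, uᵢ(Y) · X^i · uᵢ(X) = 0` in `F[X][Y]` (where `uᵢ(Y)` is `uᵢ` with its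
variable renamed to `Y`, and `X^i · uᵢ(X)` is viewed as a constant in `Y`), then every
`uᵢ` is zero. -/
theorem sum_bivariate_eq_zero (F : Type*) [Field F] (N : ℕ) (u : Fin N → Polynomial F)
    (h : ∑ i : Fin N, ((u i).map (Polynomial.C : F →+* Polynomial F)) *
      Polynomial.C (Polynomial.X ^ (i : ℕ) * u i) = 0) :
    ∀ i, u i = 0 :=
  fun i => eq_zero_of_sum_map_C_mul_C_X_pow_mul_eq_zero Fin.val_injective h i (Finset.mem_univ i)
end

section
/- Let R be a commutative ring, n a natural number, and A an (n+1)×(n+1) matrix over R. Write A in block form with upper-left scalar a = A₀₀, first-row remainder R′ (the row vector (A₀ⱼ)_{j≥1}), first-column remainder S′ (the column vector (Aᵢ₀)_{i≥1}), and lower-right n×n block M = (Aᵢⱼ)_{i,j≥1}. Then the characteristic polynomial of A satisfies charpoly(A) = (X − a)·charpoly(M) − R′ · adj(X·I − M) · S′, where adj(X·I − M) is the adjugate of the characteristic matrix of M over R[X], and R′ · adj(X·I − M) · S′ denotes the scalar obtained as the dot product of R′ (entries embedded into R[X]) with the matrix–vector product of adj(X·I − M) and S′ (entries embedded into R[X]).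 -/
/-!
Laplace-expand `det (X·I - A)` along the first row. The corner term is `(X - a) · charpoly M`.
Every other minor, expanded along its first column, is a sum of `(n-1)`-minors of `X·I - M`,
and these are, up to sign, the entries of `adj (X·I - M)`; the off-diagonal entries of
`X·I - A` are `-C (A i j)`, so the two signs cancel.
-/

open Matrix Polynomial

namespace Matrix

variable {α : Type*} [CommRing α] {n : ℕ}

theorem det_submatrix_succ_succAbove_succ (B : Matrix (Fin (n + 2)) (Fin (n + 2)) α)
    (k : Fin (n + 1)) :
    (B.submatrix Fin.succ k.succ.succAbove).det =
      ∑ i : Fin (n + 1), (-1) ^ (i : ℕ) * B i.succ 0 *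
        ((B.submatrix Fin.succ Fin.succ).submatrix i.succAbove k.succAbove).det := by
  rw [det_succ_column_zero]
  refine Finset.sum_congr rfl fun i _ => ?_
  congr 2
  ext a b
  simp [Fin.succ_succAbove_succ]

theorem det_succ_eq_mul_det_sub_dotProduct_adjugate_mulVec
    (B : Matrix (Fin (n + 1)) (Fin (n + 1)) α) :
    B.det = B 0 0 * (B.submatrix Fin.succ Fin.succ).det -
      (fun j : Fin n => B 0 j.succ) ⬝ᵥ
        ((B.submatrix Fin.succ Fin.succ).adjugate *ᵥ fun i : Fin n => B i.succ 0) := by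
  rw [det_succ_row_zero, Fin.sum_univ_succ, sub_eq_add_neg, dotProduct, ← Finset.sum_neg_distrib]
  simp only [Fin.val_zero, pow_zero, one_mul, Fin.succAbove_zero]
  congr 1
  refine Finset.sum_congr rfl fun k _ => ?_
  cases n with
  | zero => exact k.elim0
  | succ n =>
    simp only [det_submatrix_succ_succAbove_succ, mulVec, dotProduct,
      adjugate_fin_succ_eq_det_submatrix, Finset.mul_sum, ← Finset.sum_neg_distrib]
    refine Finset.sum_congr rfl fun i _ => ?_
    rw [Fin.val_succ, pow_succ, pow_add]
    ring

theorem charmatrix_submatrix {ι κ : Type*} [Fintype ι] [DecidableEq ι] [Fintype κ]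
    [DecidableEq κ] (A : Matrix κ κ α) {e : ι → κ} (he : Function.Injective e) :
    A.charmatrix.submatrix e e = (A.submatrix e e).charmatrix := by
  ext i j
  rcases eq_or_ne i j with rfl | hij
  · simp [charmatrix_apply_eq]
  · simp [charmatrix_apply_ne _ _ _ hij, charmatrix_apply_ne _ _ _ (he.ne hij)]

end Matrix

/-- Cofactor-style expansion of the characteristic polynomial along the first row and
column: `charpoly A = (X - a) * charpoly M - R′ ⬝ adj(X·I - M) ⬝ S′`, where `a = A 0 0`,
`M` is the lower-right block, `R′` the rest of the first row and `S′` the rest of the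
first column. -/
theorem charpoly_block_expansion (R : Type*) [CommRing R] (n : ℕ)
    (A : Matrix (Fin (n + 1)) (Fin (n + 1)) R) :
    A.charpoly =
      (Polynomial.X - Polynomial.C (A 0 0)) * (A.submatrix Fin.succ Fin.succ).charpoly -
        (fun j : Fin n => Polynomial.C (A 0 j.succ)) ⬝ᵥ
          ((A.submatrix Fin.succ Fin.succ).charmatrix.adjugate.mulVec
            (fun i : Fin n => Polynomial.C (A i.succ 0))) := by
  have hrow : (fun j : Fin n => A.charmatrix 0 j.succ) = -fun j => C (A 0 j.succ) :=
    funext fun j => charmatrix_apply_ne _ _ _ (Fin.succ_ne_zero j).symm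
  have hcol : (fun i : Fin n => A.charmatrix i.succ 0) = -fun i => C (A i.succ 0) :=
    funext fun i => charmatrix_apply_ne _ _ _ (Fin.succ_ne_zero i)
  rw [charpoly, charpoly, det_succ_eq_mul_det_sub_dotProduct_adjugate_mulVec, charmatrix_apply_eq,
    hrow, hcol, charmatrix_submatrix A (Fin.succ_injective n), mulVec_neg, neg_dotProduct,
    dotProduct_neg, neg_neg]
end

section
/- Let R be a commutative ring, m a natural number, and M an m×m matrix over R. Write qᵢ for the coefficient of X^i in the characteristic polynomial of M (so q_m = 1). Then the adjugate of the characteristic matrix X·I − M over R[X] is given by adj(X·I − M) = ∑_{k=0}^{m−1} X^{m−1−k} · ( ∑_{j=0}^{k} q_{m−k+j} · M^j ), where each matrix ∑_{j=0}^{k} q_{m−k+j}·M^j over R is embedded entrywise into R[X]. -/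
/-!
With `x = X • 1` central in `Matrix n n R[X]` and `a = M` embedded there, the matrices
`N k = ∑_{j ≤ k} q_{m-k+j} • a ^ j` are the intermediate values of Horner's scheme for
`p = charpoly M`, so `N (k + 1) = a * N k + q_{m-k-1}`. Hence `(x - a) * ∑_k x ^ (m-1-k) * N k`
telescopes to `p(x) - p(a)`, which is `p • 1` by Cayley–Hamilton. Thus the claimed matrix `B`
satisfies `(X·I − M) * B = det (X·I − M) • 1 = (X·I − M) * adj (X·I − M)`, and `X·I − M` can
be cancelled because its determinant `p` is monic, hence a non-zero-divisor.
-/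

open Matrix Polynomial

namespace Polynomial

variable {R S : Type*} [CommSemiring R] [Semiring S] [Algebra R S]

/-- The `k`-th intermediate value of Horner's scheme evaluating `p`, read as a polynomial of
degree `m`, at `a`. -/
def hornerPartial (p : R[X]) (m k : ℕ) (a : S) : S :=
  ∑ j ∈ Finset.range (k + 1), p.coeff (m - k + j) • a ^ j

theorem hornerPartial_zero (p : R[X]) (m : ℕ) (a : S) :
    p.hornerPartial m 0 a = p.coeff m • 1 := by
  simp [hornerPartial]

theorem hornerPartial_succ (p : R[X]) {m k : ℕ} (hk : k < m) (a : S) :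
    p.hornerPartial m (k + 1) a = a * p.hornerPartial m k a + p.coeff (m - (k + 1)) • 1 := by
  rw [hornerPartial, Finset.sum_range_succ', hornerPartial, Finset.mul_sum]
  simp only [add_zero, pow_zero, mul_smul_comm, ← pow_succ']
  congr 3 with j
  congr 2
  omega

theorem hornerPartial_self (p : R[X]) {m : ℕ} (hp : p.natDegree ≤ m) (a : S) :
    p.hornerPartial m m a = aeval a p := by
  simp [hornerPartial, aeval_eq_sum_range' (Nat.lt_succ_of_le hp)]

theorem map_hornerPartial {T F : Type*} [Semiring T] [Algebra R T] [FunLike F S T]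
    [AlgHomClass F R S T] (f : F) (p : R[X]) (m k : ℕ) (a : S) :
    f (p.hornerPartial m k a) = p.hornerPartial m k (f a) := by
  simp [hornerPartial]

theorem sub_mul_sum_pow_mul_hornerPartial {A : Type*} [Ring A] [Algebra R A] {x a : A}
    (h : Commute x a) (p : R[X]) {m : ℕ} (hp : p.natDegree ≤ m) :
    (x - a) * ∑ k ∈ Finset.range m, x ^ (m - 1 - k) * p.hornerPartial m k a =
      aeval x p - aeval a p := by
  set f : ℕ → A := fun k => x ^ (m - k) * p.hornerPartial m k a
  have term : ∀ k ∈ Finset.range m, (x - a) * (x ^ (m - 1 - k) * p.hornerPartial m k a) =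
      (f k - f (k + 1)) + p.coeff (m - 1 - k) • x ^ (m - 1 - k) := by
    intro k hk
    have hk : k < m := Finset.mem_range.mp hk
    simp only [f, p.hornerPartial_succ hk, show m - k = m - 1 - k + 1 by omega,
      show m - (k + 1) = m - 1 - k by omega]
    rw [mul_add, mul_smul_comm, mul_one, ← mul_assoc, ← mul_assoc, (h.pow_left _).eq, pow_succ',
      sub_mul, sub_mul]
    abel
  have hf0 : f 0 = p.coeff m • x ^ m := by simp [f, hornerPartial_zero]
  have hfm : f m = aeval a p := by simp [f, p.hornerPartial_self hp]
  have reflect : ∑ k ∈ Finset.range m, p.coeff (m - 1 - k) • x ^ (m - 1 - k) =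
      ∑ i ∈ Finset.range m, p.coeff i • x ^ i :=
    Finset.sum_range_reflect (fun i => p.coeff i • x ^ i) m
  rw [Finset.mul_sum, Finset.sum_congr rfl term, Finset.sum_add_distrib, Finset.sum_range_sub',
    hf0, hfm, reflect, aeval_eq_sum_range' (Nat.lt_succ_of_le hp) x, Finset.sum_range_succ]
  abel

end Polynomial

namespace Matrix

variable {n R : Type*} [Fintype n] [DecidableEq n] [CommRing R]

theorem eq_adjugate_of_mul_eq_det_smul_one {A B : Matrix n n R} (hA : IsLeftRegular A.det)
    (h : A * B = A.det • 1) : B = A.adjugate :=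
  (isRegular_of_isLeftRegular_det hA).left (h.trans (mul_adjugate A).symm)

theorem charpoly_natDegree_le (M : Matrix n n R) : M.charpoly.natDegree ≤ Fintype.card n := by
  nontriviality R
  exact M.charpoly_natDegree_eq_dim.le

end Matrix

/-- Explicit formula for the adjugate of the characteristic matrix:
`adj(X·I - M) = ∑_{k=0}^{m-1} X^{m-1-k} • (∑_{j=0}^{k} q_{m-k+j} • M^j)`, where `qᵢ`
is the coefficient of `X^i` in the characteristic polynomial of `M`. -/
theorem adjugate_charmatrix_eq (R : Type*) [CommRing R] (m : ℕ)
    (M : Matrix (Fin m) (Fin m) R) :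
    M.charmatrix.adjugate =
      ∑ k ∈ Finset.range m, (Polynomial.X : Polynomial R) ^ (m - 1 - k) •
        ((∑ j ∈ Finset.range (k + 1), M.charpoly.coeff (m - k + j) • M ^ j).map
          (Polynomial.C : R →+* Polynomial R)) := by
  set p := M.charpoly
  let f := (Algebra.ofId R R[X]).mapMatrix (m := Fin m)
  set x : Matrix (Fin m) (Fin m) R[X] := algebraMap R[X] _ X
  have hdeg : p.natDegree ≤ m := M.charpoly_natDegree_le.trans_eq (Fintype.card_fin m)
  refine (eq_adjugate_of_mul_eq_det_smul_one M.charpoly_monic.isRegular.left ?_).symm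
  calc M.charmatrix * _
      = (x - f M) * ∑ k ∈ Finset.range m, x ^ (m - 1 - k) * p.hornerPartial m k (f M) := by
        congr 1
        refine Finset.sum_congr rfl fun k _ => ?_
        rw [← map_pow, ← Algebra.smul_def, ← map_hornerPartial]
        rfl
    _ = aeval x p - aeval (f M) p := sub_mul_sum_pow_mul_hornerPartial (Algebra.commutes X _) p hdeg
    _ = p • 1 := by
        rw [aeval_algebraMap_apply, aeval_X_left_apply, aeval_algHom_apply, aeval_self_charpoly,
          map_zero, sub_zero, Algebra.algebraMap_eq_smul_one]
end

section
/- Berkowitz's algorithm computes the characteristic polynomial: let R be a commutative ring, n ≥ 1, and A an n×n matrix over R (with rows and columns indexed 1, …, n). For 1 ≤ k ≤ n−1, let a_k = A_{kk}, let R_k be the row vector (A_{k,k+1}, …, A_{k,n}), let S_k be the column vector (A_{k+1,k}, …, A_{n,k}), and let M_k be the (n−k)×(n−k) submatrix (A_{ij})_{i,j>k}. Define Col(k,A) to be the (n−k+2)×(n−k+1) lower-triangular Toeplitz matrix whose first column is (1, −a_k, −R_kS_k, −R_kM_kS_k, −R_kM_k²S_k, …, −R_kM_k^{n−k−2}S_k),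 and define Col(n,A) to be the (2×1) matrix with entries (1, −A_{nn}). Then the (n+1)-entry column vector Col(1,A)·Col(2,A)⋯Col(n,A) is the coefficient vector of the characteristic polynomial of A: its i-th entry from the top (i = 0, …, n) equals the coefficient of X^{n−i} in charpoly(A). -/
open Matrix Polynomial

/-!
Berkowitz's algorithm is Samuelson's recurrence, unrolled. For a matrix bordered by a corner `b`,
a row `r` and a column `s` around `M`,
`charpoly [[b, r], [s, M]] = (X - b) * charpoly M - r ⬝ adj (X - M) s`,
which follows by multiplying the characteristic matrix by `[[det, 0], [-adj s, 1]]`, taking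
determinants and cancelling the monic `charpoly M`. Telescoping with Cayley–Hamilton gives
`adj (X - M) = ∑ₖ divX^[k+1] (charpoly M) • Mᵏ`, so the coefficients of the bordered
characteristic polynomial are the Toeplitz matrix `Col` applied to those of `charpoly M`.
Induction over the trailing principal submatrices of `A` then gives the theorem.
-/

open Fin.NatCast in
/-- `berkCol R n A j` is the matrix `Col(k, A)` of Berkowitz's algorithm for `k = n - j`
(with rows and columns of `A` indexed `0, …, n-1` instead of `1, …, n`): the
`(n-k+2) × (n-k+1)` lower-triangular Toeplitz matrix with `1` on the main diagonal,
`-a_k` on the first subdiagonal, and `-(R_k ⬝ M_k^{i-j'-2} ⬝ S_k)` in position `(i, j')`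
for `i ≥ j' + 2`. -/
def berkCol (R : Type*) [CommRing R] (n : ℕ) [NeZero n] (A : Matrix (Fin n) (Fin n) R)
    (j : ℕ) : Matrix (Fin (j + 2)) (Fin (j + 1)) R :=
  Matrix.of fun i j' =>
    if (i : ℕ) = (j' : ℕ) then 1
    else if (i : ℕ) = (j' : ℕ) + 1 then -A ((n - j - 1 : ℕ) : Fin n) ((n - j - 1 : ℕ) : Fin n)
    else if (j' : ℕ) + 2 ≤ (i : ℕ) then
      -((fun l : Fin j => A ((n - j - 1 : ℕ) : Fin n) ((n - j + (l : ℕ) : ℕ) : Fin n)) ⬝ᵥ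
        (((Matrix.of fun i' l : Fin j =>
            A ((n - j + (i' : ℕ) : ℕ) : Fin n) ((n - j + (l : ℕ) : ℕ) : Fin n)) ^
              ((i : ℕ) - (j' : ℕ) - 2)).mulVec
          (fun l : Fin j => A ((n - j + (l : ℕ) : ℕ) : Fin n) ((n - j - 1 : ℕ) : Fin n))))
    else 0

/-- `berkProd R n A j` is the iterated product `Col(n-j+1, A) ⋯ Col(n, A)` of the last
`j` matrices of Berkowitz's algorithm; in particular `berkProd R n A n` is the full
product `Col(1, A) ⋯ Col(n, A)`, an `(n+1) × 1` matrix. -/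
def berkProd (R : Type*) [CommRing R] (n : ℕ) [NeZero n] (A : Matrix (Fin n) (Fin n) R) :
    (j : ℕ) → Matrix (Fin (j + 1)) (Fin 1) R
  | 0 => 1
  | j + 1 => berkCol R n A j * berkProd R n A j

section Polynomial

variable {R : Type*} [CommRing R]

theorem coeff_iterate_divX (p : R[X]) (k i : ℕ) : (divX^[k] p).coeff i = p.coeff (i + k) := by
  induction k generalizing i with
  | zero => rfl
  | succ k ih => rw [Function.iterate_succ_apply', coeff_divX, ih, add_right_comm, add_assoc]

theorem X_mul_iterate_divX_succ (p : R[X]) (k : ℕ) :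
    X * divX^[k + 1] p = divX^[k] p - C (p.coeff k) := by
  rw [eq_sub_iff_add_eq, Function.iterate_succ_apply', ← zero_add k, ← coeff_iterate_divX,
    zero_add, X_mul_divX_add]

theorem coeff_X_mul_eq_sum_ite (p : R[X]) {d i : ℕ} (hi : i ≤ d + 1) :
    (X * p).coeff (d + 1 - i)
      = ∑ j ∈ Finset.range (d + 1), if i = j then p.coeff (d - j) else 0 := by
  rw [Finset.sum_ite_eq]
  rcases hi.lt_or_eq with hi | rfl
  · rw [if_pos (Finset.mem_range.2 hi), show d + 1 - i = d - i + 1 by omega, coeff_X_mul]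
  · simp

theorem coeff_C_mul_eq_sum_ite (b : R) {p : R[X]} {d i : ℕ} (hp : p.natDegree ≤ d)
    (hi : i ≤ d + 1) :
    (C b * p).coeff (d + 1 - i)
      = ∑ j ∈ Finset.range (d + 1), if i = j + 1 then b * p.coeff (d - j) else 0 := by
  rcases i with _ | i
  · rw [coeff_C_mul, coeff_eq_zero_of_natDegree_lt (by omega), mul_zero]
    exact (Finset.sum_eq_zero fun j _ => if_neg (by omega)).symm
  · simp only [Nat.add_right_cancel_iff]
    rw [Finset.sum_ite_eq, if_pos (Finset.mem_range.2 (by omega)), coeff_C_mul,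
      show d + 1 - (i + 1) = d - i by omega]

theorem coeff_sum_C_mul_iterate_divX_eq_sum_ite (t : ℕ → R) {p : R[X]} {d i : ℕ}
    (hp : p.natDegree ≤ d) (hi : i ≤ d + 1) :
    (∑ k ∈ Finset.range d, C (t k) * divX^[k + 1] p).coeff (d + 1 - i)
      = ∑ j ∈ Finset.range (d + 1),
          if j + 2 ≤ i then t (i - j - 2) * p.coeff (d - j) else 0 := by
  calc _ = ∑ k ∈ Finset.range (i - 1), t k * p.coeff (d + 1 - i + (k + 1)) := by
        simp only [finsetSum_coeff, coeff_C_mul, coeff_iterate_divX]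
        refine (Finset.sum_subset (Finset.range_subset_range.2 (by omega)) fun k hk hki => ?_).symm
        simp only [Finset.mem_range] at hk hki
        rw [coeff_eq_zero_of_natDegree_lt (by omega), mul_zero]
    _ = ∑ j ∈ Finset.range (i - 1), t (i - j - 2) * p.coeff (d - j) := by
        rw [← Finset.sum_range_reflect]
        refine Finset.sum_congr rfl fun j hj => ?_
        rw [Finset.mem_range] at hj
        rw [show i - 1 - 1 - j = i - j - 2 by omega,
          show d + 1 - i + (i - j - 2 + 1) = d - j by omega]
    _ = _ := by
        rw [← Finset.sum_filter]
        congr 1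
        ext j
        simp only [Finset.mem_range, Finset.mem_filter]
        omega

theorem coeff_samuelson_eq_sum_toeplitz (b : R) (t : ℕ → R) {p : R[X]} {d : ℕ}
    (hp : p.natDegree ≤ d) (i : Fin (d + 2)) :
    ((X - C b) * p - ∑ k ∈ Finset.range d, C (t k) * divX^[k + 1] p).coeff (d + 1 - i)
      = ∑ j : Fin (d + 1),
          (if (i : ℕ) = j then 1
           else if (i : ℕ) = j + 1 then -b
           else if (j : ℕ) + 2 ≤ i then -t (i - j - 2)
           else 0) * p.coeff (d - j) := by
  have hi : (i : ℕ) ≤ d + 1 := Nat.lt_succ_iff.1 i.isLt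
  rw [sub_mul, coeff_sub, coeff_sub, coeff_X_mul_eq_sum_ite p hi, coeff_C_mul_eq_sum_ite b hp hi,
    coeff_sum_C_mul_iterate_divX_eq_sum_ite t hp hi, ← Finset.sum_sub_distrib,
    ← Finset.sum_sub_distrib,
    Fin.sum_univ_eq_sum_range (fun j => (if (i : ℕ) = j then 1 else if (i : ℕ) = j + 1 then -b
      else if j + 2 ≤ (i : ℕ) then -t (i - j - 2) else 0) * p.coeff (d - j))]
  refine Finset.sum_congr rfl fun j _ => ?_
  split_ifs <;> first | omega | ring

end Polynomial

section Samuelson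

variable {R : Type*} [CommRing R] {m : Type*} [Fintype m] [DecidableEq m]

theorem natDegree_charpoly_le (M : Matrix m m R) : M.charpoly.natDegree ≤ Fintype.card m := by
  nontriviality R
  exact M.charpoly_natDegree_eq_dim.le

theorem sum_C_coeff_charpoly_smul_pow (M : Matrix m m R) :
    ∑ k ∈ Finset.range (Fintype.card m + 1), C (M.charpoly.coeff k) • (M ^ k).map C = 0 := by
  have hCH := M.aeval_self_charpoly
  rw [aeval_eq_sum_range' (Nat.lt_succ_of_le (natDegree_charpoly_le M))] at hCH
  calc _ = (∑ k ∈ Finset.range (Fintype.card m + 1), M.charpoly.coeff k • M ^ k).map C := by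
        ext i j; simp [Matrix.sum_apply]
    _ = 0 := by rw [hCH, Matrix.map_zero _ (map_zero C)]

theorem charmatrix_mul_sum_iterate_divX (M : Matrix m m R) :
    charmatrix M *
        ∑ k ∈ Finset.range (Fintype.card m), divX^[k + 1] M.charpoly • (M ^ k).map C
      = M.charpoly • 1 := by
  have hdeg := natDegree_charpoly_le M
  set p := M.charpoly
  set d := Fintype.card m
  have hstep : ∀ k, charmatrix M * (divX^[k + 1] p • (M ^ k).map C)
      = (divX^[k] p • (M ^ k).map C - divX^[k + 1] p • (M ^ (k + 1)).map C)
        - C (p.coeff k) • (M ^ k).map C := by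
    intro k
    rw [charmatrix, Matrix.mul_smul, sub_mul, scalar_apply, ← smul_one_eq_diagonal, smul_mul,
      one_mul, RingHom.mapMatrix_apply, ← Matrix.map_mul, ← pow_succ', smul_sub, smul_smul,
      mul_comm, X_mul_iterate_divX_succ, sub_smul]
    abel
  have htop : divX^[d] p = C (p.coeff d) := by
    ext i
    rw [coeff_iterate_divX, coeff_C]
    rcases Nat.eq_zero_or_pos i with rfl | hi
    · simp
    · rw [if_neg hi.ne', coeff_eq_zero_of_natDegree_lt (by omega)]
  rw [Finset.mul_sum, Finset.sum_congr rfl fun k _ => hstep k, Finset.sum_sub_distrib,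
    Finset.sum_range_sub', htop, sub_sub, add_comm, ← Finset.sum_range_succ,
    sum_C_coeff_charpoly_smul_pow, sub_zero]
  simp

theorem adjugate_charmatrix (M : Matrix m m R) :
    (charmatrix M).adjugate
      = ∑ k ∈ Finset.range (Fintype.card m), divX^[k + 1] M.charpoly • (M ^ k).map C := by
  set G := ∑ k ∈ Finset.range (Fintype.card m), divX^[k + 1] M.charpoly • (M ^ k).map C
  have h : M.charpoly • G = M.charpoly • (charmatrix M).adjugate := by
    calc M.charpoly • G = (charmatrix M).adjugate * charmatrix M * G := by
          rw [adjugate_mul, smul_mul, one_mul]; rfl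
      _ = M.charpoly • (charmatrix M).adjugate := by
          rw [Matrix.mul_assoc, charmatrix_mul_sum_iterate_divX, Matrix.mul_smul, Matrix.mul_one]
  refine Matrix.ext fun i j => (M.charpoly_monic.isRegular.left ?_).symm
  exact congrFun (congrFun h i) j

theorem det_fromBlocks_unique_of_isRegular {ι : Type*} [Unique ι] [Fintype ι] [DecidableEq ι]
    (a : R) (r s : m → R) (D : Matrix m m R) (hD : IsRegular D.det) :
    (fromBlocks (of fun _ _ : ι => a) (replicateRow ι r) (replicateCol ι s) D).det
      = a * D.det - r ⬝ᵥ (D.adjugate *ᵥ s) := by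
  set Q : Matrix (ι ⊕ m) (ι ⊕ m) R :=
    fromBlocks (of fun _ _ => D.det) 0 (-replicateCol ι (D.adjugate *ᵥ s)) 1
  have hQ : Q.det = D.det := by
    rw [det_fromBlocks_zero₁₂, det_unique, det_one, mul_one, of_apply]
  have hprod : fromBlocks (of fun _ _ : ι => a) (replicateRow ι r) (replicateCol ι s) D * Q
      = fromBlocks (of fun _ _ : ι => a * D.det - r ⬝ᵥ (D.adjugate *ᵥ s))
          (replicateRow ι r) 0 D := by
    rw [fromBlocks_multiply]
    congr 1
    · ext; simp [Matrix.mul_apply, dotProduct, mulVec, sub_eq_add_neg]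
    · simp
    · have hDs : D *ᵥ (D.adjugate *ᵥ s) = D.det • s := by
        rw [mulVec_mulVec, mul_adjugate, smul_mulVec, one_mulVec]
      ext i j
      have hi : ∑ k, D i k * (D.adjugate *ᵥ s) k = D.det * s i := congrFun hDs i
      simp [Matrix.mul_apply, hi, mul_comm]
    · simp
  have h := congrArg det hprod
  rw [det_mul, hQ, det_fromBlocks_zero₂₁, det_unique (of fun _ _ : ι => _), of_apply] at h
  exact hD.right h

theorem dotProduct_adjugate_charmatrix_mulVec (r s : m → R) (M : Matrix m m R) :
    (C ∘ r) ⬝ᵥ ((charmatrix M).adjugate *ᵥ (C ∘ s))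
      = ∑ k ∈ Finset.range (Fintype.card m),
          C (r ⬝ᵥ (M ^ k *ᵥ s)) * divX^[k + 1] M.charpoly := by
  rw [adjugate_charmatrix, sum_mulVec, dotProduct_sum]
  refine Finset.sum_congr rfl fun k _ => ?_
  have hmap : (M ^ k).map C *ᵥ (C ∘ s) = C ∘ (M ^ k *ᵥ s) :=
    funext fun i => (RingHom.map_mulVec C (M ^ k) s i).symm
  rw [smul_mulVec, dotProduct_smul, hmap, ← RingHom.map_dotProduct, smul_eq_mul, mul_comm]

theorem charpoly_fromBlocks_unique {ι : Type*} [Unique ι] [Fintype ι] [DecidableEq ι]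
    (b : R) (r s : m → R) (M : Matrix m m R) :
    (fromBlocks (of fun _ _ : ι => b) (replicateRow ι r) (replicateCol ι s) M).charpoly
      = (X - C b) * M.charpoly
        - ∑ k ∈ Finset.range (Fintype.card m),
            C (r ⬝ᵥ (M ^ k *ᵥ s)) * divX^[k + 1] M.charpoly := by
  have h₁₁ : charmatrix (of fun _ _ : ι => b) = of fun _ _ => X - C b := by
    ext i j
    rw [Subsingleton.elim i j, charmatrix_apply_eq, of_apply, of_apply]
  have h₁₂ : -(replicateRow ι r).map C = replicateRow ι (-(C ∘ r)) := rfl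
  have h₂₁ : -(replicateCol ι s).map C = replicateCol ι (-(C ∘ s)) := rfl
  rw [Matrix.charpoly, charmatrix_fromBlocks, h₁₁, h₁₂, h₂₁,
    det_fromBlocks_unique_of_isRegular _ _ _ _ M.charpoly_monic.isRegular, neg_dotProduct,
    mulVec_neg, dotProduct_neg, neg_neg, dotProduct_adjugate_charmatrix_mulVec]
  rfl

theorem coeff_charpoly_fromBlocks_fin_one {d : ℕ} (b : R)
    (r s : Fin d → R) (M : Matrix (Fin d) (Fin d) R) (i : Fin (d + 2)) :
    (fromBlocks (of fun _ _ : Fin 1 => b) (replicateRow (Fin 1) r) (replicateCol (Fin 1) s)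
        M).charpoly.coeff (d + 1 - i)
      = ∑ j : Fin (d + 1),
          (if (i : ℕ) = j then 1
           else if (i : ℕ) = j + 1 then -b
           else if (j : ℕ) + 2 ≤ i then -(r ⬝ᵥ (M ^ ((i : ℕ) - j - 2) *ᵥ s))
           else 0) * M.charpoly.coeff (d - j) := by
  have hp : M.charpoly.natDegree ≤ d := (natDegree_charpoly_le M).trans_eq (Fintype.card_fin d)
  rw [charpoly_fromBlocks_unique, Fintype.card_fin]
  exact coeff_samuelson_eq_sum_toeplitz b (fun k => r ⬝ᵥ (M ^ k *ᵥ s)) hp i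

end Samuelson

section Trailing

open Fin.NatCast

variable {R : Type*} {n : ℕ} [NeZero n]

/-- The paper's `M_{n-j}`. -/
def trailingSubmatrix (A : Matrix (Fin n) (Fin n) R) (j : ℕ) : Matrix (Fin j) (Fin j) R :=
  of fun i l : Fin j => A ((n - j + (i : ℕ) : ℕ) : Fin n) ((n - j + (l : ℕ) : ℕ) : Fin n)

theorem trailingSubmatrix_self (A : Matrix (Fin n) (Fin n) R) : trailingSubmatrix A n = A := by
  ext i l
  simp [trailingSubmatrix, Fin.cast_val_eq_self]

theorem charpoly_trailingSubmatrix_succ [CommRing R] (A : Matrix (Fin n) (Fin n) R) {j : ℕ}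
    (hj : j + 1 ≤ n) :
    (trailingSubmatrix A (j + 1)).charpoly
      = (fromBlocks
          (of fun _ _ : Fin 1 => A ((n - j - 1 : ℕ) : Fin n) ((n - j - 1 : ℕ) : Fin n))
          (replicateRow (Fin 1) fun l : Fin j =>
            A ((n - j - 1 : ℕ) : Fin n) ((n - j + (l : ℕ) : ℕ) : Fin n))
          (replicateCol (Fin 1) fun l : Fin j =>
            A ((n - j + (l : ℕ) : ℕ) : Fin n) ((n - j - 1 : ℕ) : Fin n))
          (trailingSubmatrix A j)).charpoly := by
  set e : Fin 1 ⊕ Fin j ≃ Fin (j + 1) := finSumFinEquiv.trans (finCongr (Nat.add_comm 1 j))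
  have hval : ∀ z : Fin 1 ⊕ Fin j,
      ((e z : Fin (j + 1)) : ℕ) = Sum.elim (fun _ => 0) (fun l : Fin j => 1 + (l : ℕ)) z := by
    rintro (z | z) <;> simp [e, add_comm]
  have h₀ : n - (j + 1) + 0 = n - j - 1 := by omega
  have h₁ : ∀ l : ℕ, n - (j + 1) + (1 + l) = n - j + l := fun l => by omega
  rw [← charpoly_reindex e.symm]
  congr 1
  ext (x | x) (y | y) <;>
    simp only [reindex_apply, Equiv.symm_symm, submatrix_apply, trailingSubmatrix, of_apply,
      hval, Sum.elim_inl, Sum.elim_inr, h₀, h₁, fromBlocks_apply₁₁, fromBlocks_apply₁₂,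
      fromBlocks_apply₂₁, fromBlocks_apply₂₂, replicateRow_apply, replicateCol_apply]

theorem berkProd_apply_eq_coeff_charpoly [CommRing R] (A : Matrix (Fin n) (Fin n) R) {j : ℕ}
    (hj : j ≤ n) (i : Fin (j + 1)) :
    berkProd R n A j i 0 = (trailingSubmatrix A j).charpoly.coeff (j - i) := by
  induction j with
  | zero =>
    rw [Fin.fin_one_eq_zero i, Matrix.charpoly, det_isEmpty]
    simp [berkProd]
  | succ j ih =>
    calc berkProd R n A (j + 1) i 0
        = ∑ j', berkCol R n A j i j' * berkProd R n A j j' 0 := Matrix.mul_apply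
      _ = ∑ j', berkCol R n A j i j' * (trailingSubmatrix A j).charpoly.coeff (j - j') := by
        simp only [ih (by omega)]
      _ = (trailingSubmatrix A (j + 1)).charpoly.coeff (j + 1 - i) := by
        rw [charpoly_trailingSubmatrix_succ A hj, coeff_charpoly_fromBlocks_fin_one]
        rfl

end Trailing

/-- Berkowitz's algorithm computes the characteristic polynomial: the `i`-th entry of the
column vector `Col(1, A) ⋯ Col(n, A)` is the coefficient of `X^{n-i}` of `charpoly A`. -/
theorem berkowitz_charpoly (R : Type*) [CommRing R] (n : ℕ) [NeZero n]
    (A : Matrix (Fin n) (Fin n) R) (i : Fin (n + 1)) :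
    berkProd R n A n i 0 = A.charpoly.coeff (n - (i : ℕ)) := by
  rw [berkProd_apply_eq_coeff_charpoly A le_rfl i, trailingSubmatrix_self]
end

section
/- (Non-uniform Ray-Chaudhuri–Wilson theorem.) Let n, m, s be natural numbers, L a set of s natural numbers, and A₁, …, A_m pairwise distinct subsets of an n-element set such that the family is L-intersecting, i.e., for all i ≠ j the cardinality of Aᵢ ∩ Aⱼ belongs to L. Then m ≤ ∑_{i=0}^{s} C(n, i), where C(n, i) is the binomial coefficient n choose i. -/
/-!
To `Aᵢ` attach the function `fᵢ S = ∏_{l ∈ L, l < |Aᵢ|} (|S ∩ Aᵢ| - l)` on subsets `S`.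
Then `fᵢ Aᵢ ≠ 0`, while `fⱼ Aᵢ = 0` for `j ≠ i` with `|Aᵢ| ≤ |Aⱼ|` (as `|Aᵢ ∩ Aⱼ| < |Aⱼ|` lies
in `L`), so the `fᵢ` are linearly independent by a triangularity argument. Since
`|S ∩ B| = ∑_{k ∈ B} [k ∈ S]`, multiplying by `|S ∩ B| - c` maps the span of the indicators
`S ↦ [T ⊆ S]` with `|T| ≤ d` into the one with `|T| ≤ d + 1`; hence every `fᵢ` lies in the span
of the `∑_{i ≤ s} C(n, i)` indicators with `|T| ≤ s`.
-/

open Finset Module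

lemma card_filter_card_le {α : Type*} [Fintype α] (d : ℕ) :
    #{T : Finset α | #T ≤ d} = ∑ i ∈ range (d + 1), (Fintype.card α).choose i := by
  rw [card_eq_sum_card_fiberwise (f := card) (t := range (d + 1))]
  · refine sum_congr rfl fun i hi => ?_
    rw [← card_univ, ← card_powersetCard, powersetCard_eq_filter, powerset_univ, filter_filter]
    congr 1
    exact filter_congr fun T _ => by simp only [mem_range] at hi; omega
  · intro T hT
    simp only [coe_filter, mem_univ, true_and, Set.mem_ofPred_eq, coe_range, Set.mem_Iio] at hT ⊢
    omega

section LowDegreeSpan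

variable (K α : Type*) [Field K] [DecidableEq α]

def supsetIndicator (T : Finset α) : Finset α → K :=
  fun S => if T ⊆ S then 1 else 0

def lowDegreeSpan (d : ℕ) : Submodule K (Finset α → K) :=
  Submodule.span K (supsetIndicator K α '' {T | #T ≤ d})

variable {K α}

lemma lowDegreeSpan_mono {d e : ℕ} (h : d ≤ e) : lowDegreeSpan K α d ≤ lowDegreeSpan K α e :=
  Submodule.span_mono <| Set.image_mono fun _ hT => le_trans hT h

lemma supsetIndicator_mem_lowDegreeSpan {d : ℕ} {T : Finset α} (hT : #T ≤ d) :
    supsetIndicator K α T ∈ lowDegreeSpan K α d :=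
  Submodule.subset_span ⟨T, hT, rfl⟩

lemma card_inter_mul_supsetIndicator (B T : Finset α) :
    (fun S => (#(S ∩ B) : K)) * supsetIndicator K α T =
      ∑ k ∈ B, supsetIndicator K α (insert k T) := by
  funext S
  by_cases hT : T ⊆ S <;>
    simp [supsetIndicator, hT, insert_subset_iff, inter_comm]

lemma mul_mem_lowDegreeSpan {d : ℕ} (B : Finset α) (c : K) {f : Finset α → K}
    (hf : f ∈ lowDegreeSpan K α d) :
    (fun S => (#(S ∩ B) : K) - c) * f ∈ lowDegreeSpan K α (d + 1) := by
  have hmap : (lowDegreeSpan K α d).map (LinearMap.mulLeft K fun S => (#(S ∩ B) : K) - c) ≤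
      lowDegreeSpan K α (d + 1) := by
    rw [lowDegreeSpan, Submodule.map_span_le]
    rintro _ ⟨T, hT, rfl⟩
    have hsplit : (fun S => (#(S ∩ B) : K) - c) * supsetIndicator K α T =
        (fun S => (#(S ∩ B) : K)) * supsetIndicator K α T - c • supsetIndicator K α T := by
      funext S; simp only [Pi.mul_apply, Pi.sub_apply, Pi.smul_apply, smul_eq_mul]; ring
    rw [LinearMap.mulLeft_apply, hsplit, card_inter_mul_supsetIndicator]
    refine Submodule.sub_mem _ (Submodule.sum_mem _ fun k _ => ?_) (Submodule.smul_mem _ _ ?_)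
    · exact supsetIndicator_mem_lowDegreeSpan <| (card_insert_le _ _).trans (Nat.succ_le_succ hT)
    · exact lowDegreeSpan_mono d.le_succ (supsetIndicator_mem_lowDegreeSpan hT)
  exact hmap ⟨f, hf, rfl⟩

lemma prod_mem_lowDegreeSpan (B : Finset α) (M : Finset ℕ) :
    ∏ l ∈ M, (fun S => (#(S ∩ B) : K) - l) ∈ lowDegreeSpan K α #M := by
  induction M using Finset.induction with
  | empty =>
    have hone : (1 : Finset α → K) = supsetIndicator K α ∅ := by
      funext S; simp [supsetIndicator]
    rw [prod_empty, hone]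
    exact supsetIndicator_mem_lowDegreeSpan card_empty.le
  | insert a M ha ih =>
    rw [prod_insert ha, card_insert_of_notMem ha]
    exact mul_mem_lowDegreeSpan B (a : K) ih

lemma finrank_lowDegreeSpan_le [Fintype α] (d : ℕ) :
    finrank K (lowDegreeSpan K α d) ≤ ∑ i ∈ range (d + 1), (Fintype.card α).choose i := by
  classical
  have himage : supsetIndicator K α '' {T | #T ≤ d} =
      (({T : Finset α | #T ≤ d} : Finset _).image (supsetIndicator K α) : Set _) := by
    simp
  rw [lowDegreeSpan, himage, ← card_filter_card_le]
  exact (finrank_span_finset_le_card _).trans card_image_le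

end LowDegreeSpan

lemma linearIndependent_of_eval_triangular {K ι β γ : Type*} [Ring K] [NoZeroDivisors K]
    [Fintype ι] [LinearOrder γ] {f : ι → β → K} (x : ι → β) (w : ι → γ) (hdiag : ∀ i, f i (x i) ≠ 0)
    (hoff : ∀ i j, i ≠ j → w i ≤ w j → f j (x i) = 0) :
    LinearIndependent K f := by
  classical
  rw [Fintype.linearIndependent_iff]
  intro g hg
  by_contra! hne
  obtain ⟨i₀, hi₀⟩ := hne
  obtain ⟨i, hi, hmin⟩ := exists_min_image {i | g i ≠ 0} w ⟨i₀, by simpa using hi₀⟩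
  have heval : ∑ j, g j * f j (x i) = 0 := by simpa [Finset.sum_apply] using congrFun hg (x i)
  rw [sum_eq_single i (fun j _ hji => ?_) (by simp)] at heval
  · exact (mem_filter.1 hi).2 ((mul_eq_zero.1 heval).resolve_right (hdiag i))
  · by_cases hgj : g j = 0
    · simp [hgj]
    · simp [hoff i j (Ne.symm hji) (hmin j (by simpa using hgj))]

lemma card_inter_lt_card_right {α : Type*} [DecidableEq α] {A B : Finset α} (hne : A ≠ B)
    (hle : #A ≤ #B) : #(A ∩ B) < #B :=
  card_lt_card <| ssubset_of_subset_of_ne inter_subset_right fun h =>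
    hne (eq_of_subset_of_card_le (inter_eq_right.1 h) hle).symm

/-- Non-uniform Ray-Chaudhuri–Wilson theorem: if `A₁, …, A_m` are pairwise distinct
subsets of an `n`-element set forming an `L`-intersecting family with `|L| = s`, then
`m ≤ ∑_{i=0}^{s} C(n, i)`. -/
theorem ray_chaudhuri_wilson (n m s : ℕ) (L : Finset ℕ) (hL : L.card = s)
    (A : Fin m → Finset (Fin n)) (hA : Function.Injective A)
    (hint : ∀ i j : Fin m, i ≠ j → (A i ∩ A j).card ∈ L) :
    m ≤ ∑ i ∈ Finset.range (s + 1), Nat.choose n i := by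
  let f : Fin m → Finset (Fin n) → ℚ := fun i =>
    ∏ l ∈ L with l < #(A i), fun S => (#(S ∩ A i) : ℚ) - l
  have hspan : Submodule.span ℚ (Set.range f) ≤ lowDegreeSpan ℚ (Fin n) s := by
    rw [Submodule.span_le]
    rintro _ ⟨i, rfl⟩
    exact lowDegreeSpan_mono (hL ▸ card_filter_le _ _) (prod_mem_lowDegreeSpan _ _)
  have hind : LinearIndependent ℚ f := by
    refine linearIndependent_of_eval_triangular A (fun i => #(A i)) (fun i => ?_)
      fun i j hij hle => ?_
    · simp only [f, prod_apply, inter_self]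
      refine prod_ne_zero_iff.2 fun l hl => sub_ne_zero.2 ?_
      exact_mod_cast ((mem_filter.1 hl).2).ne'
    · simp only [f, prod_apply]
      exact prod_eq_zero
        (mem_filter.2 ⟨hint i j hij, card_inter_lt_card_right (hA.ne hij) hle⟩) (sub_self _)
  calc m = finrank ℚ (Submodule.span ℚ (Set.range f)) := by simp [finrank_span_eq_card hind]
    _ ≤ finrank ℚ (lowDegreeSpan ℚ (Fin n) s) := Submodule.finrank_mono hspan
    _ ≤ ∑ i ∈ range (s + 1), n.choose i := by
      simpa using finrank_lowDegreeSpan_le (K := ℚ) (α := Fin n) s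
end

section
/- (Oddtown theorem.) Let A₁, …, A_m be subsets of an n-element set such that each Aᵢ has odd cardinality and for all i ≠ j the cardinality of Aᵢ ∩ Aⱼ is even. Then m ≤ n. -/
/-! Over `ZMod 2` the indicator vectors of the sets `Aᵢ` are orthonormal for the dot product,
since `1_A ⬝ᵥ 1_B = |A ∩ B| mod 2`. Orthonormal vectors are linearly independent, so there are
at most `n = dim (ZMod 2)ⁿ` of them. -/

open Finset Matrix

theorem Matrix.linearIndependent_of_dotProduct_pairwise_eq_zero {K ι κ : Type*} [Field K]
    [Fintype κ] {v : ι → κ → K} (hself : ∀ i, v i ⬝ᵥ v i ≠ 0)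
    (hortho : Pairwise fun i j ↦ v i ⬝ᵥ v j = 0) : LinearIndependent K v :=
  LinearMap.BilinForm.linearIndependent_of_iIsOrtho (B := dotProductBilin K K) hortho hself

theorem Finset.indicator_one_dotProduct_indicator_one {ι R : Type*} [Fintype ι] [DecidableEq ι]
    [NonAssocSemiring R] (s t : Finset ι) :
    (s : Set ι).indicator 1 ⬝ᵥ (t : Set ι).indicator (1 : ι → R) = #(s ∩ t) := by
  simp [dotProduct, Set.indicator_apply, inter_comm]

/-- Oddtown theorem: if `A₁, …, A_m` are subsets of an `n`-element set, each of odd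
cardinality, with all pairwise intersections of even cardinality, then `m ≤ n`. -/
theorem oddtown (n m : ℕ) (A : Fin m → Finset (Fin n))
    (hodd : ∀ i, Odd (A i).card)
    (heven : ∀ i j : Fin m, i ≠ j → Even ((A i ∩ A j).card)) :
    m ≤ n := by
  let v : Fin m → Fin n → ZMod 2 := fun i ↦ (A i : Set (Fin n)).indicator 1
  have hv : LinearIndependent (ZMod 2) v := by
    refine linearIndependent_of_dotProduct_pairwise_eq_zero (fun i ↦ ?_) fun i j hij ↦ ?_
    · rw [indicator_one_dotProduct_indicator_one, inter_self, (hodd i).natCast_zmod_two]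
      exact one_ne_zero
    · change v i ⬝ᵥ v j = 0
      rw [indicator_one_dotProduct_indicator_one, (heven i j hij).natCast_zmod_two]
  simpa using hv.fintype_card_le_finrank
end

section
/- (Graham–Pollak theorem.) Suppose the edge set of the complete graph on n vertices is partitioned into m complete bipartite graphs: there are functions X, Y : Fin m → Finset (Fin n) with X k ∩ Y k = ∅ for each k, such that for every pair of distinct vertices u, v there is exactly one index k with either (u ∈ X k and v ∈ Y k) or (u ∈ Y k and v ∈ X k). Then m ≥ n − 1. -/
/-! If `m + 1 < n`, the `m + 1` linear conditions `∑ u, x u = 0` and `∑ u ∈ X k, x u = 0` have a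
nonzero real solution `x`. Since every pair of distinct vertices lies in exactly one biclique,
`(∑ u, x u) ^ 2 = ∑ u, x u ^ 2 + 2 * ∑ k, (∑ u ∈ X k, x u) * (∑ v ∈ Y k, x v)`, and for this `x`
the identity reads `0 = ∑ u, x u ^ 2`, which is impossible. -/

open Finset

theorem exists_ne_zero_forall_sum_eq_zero {K ι κ : Type*} [Field K] [Fintype ι] [Fintype κ]
    (s : κ → Finset ι) (h : Fintype.card κ < Fintype.card ι) :
    ∃ x : ι → K, x ≠ 0 ∧ ∀ k, ∑ i ∈ s k, x i = 0 := by
  let f : (ι → K) →ₗ[K] κ → K := LinearMap.pi fun k ↦ ∑ i ∈ s k, LinearMap.proj i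
  obtain ⟨x, hx, hx0⟩ := Submodule.exists_mem_ne_zero_of_ne_bot
    (LinearMap.ker_ne_bot_of_finrank_lt (f := f) (by simpa using h))
  exact ⟨x, hx0, fun k ↦ by simpa [f] using congrFun (LinearMap.mem_ker.mp hx) k⟩

section BicliquePartition

variable {α R : Type*} [Fintype α] [DecidableEq α] [CommSemiring R]

theorem sum_sum_ite_mem_and_mem (A B : Finset α) (f g : α → R) :
    ∑ u, ∑ v, (if u ∈ A ∧ v ∈ B then f u * g v else 0) = (∑ u ∈ A, f u) * ∑ v ∈ B, g v := by
  simp [ite_and, sum_mul_sum]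

theorem sum_sum_ite_biclique (A B : Finset α) (hAB : Disjoint A B) (x : α → R) :
    ∑ u, ∑ v, (if (u ∈ A ∧ v ∈ B) ∨ (u ∈ B ∧ v ∈ A) then x u * x v else 0) =
      2 * ((∑ u ∈ A, x u) * ∑ v ∈ B, x v) := by
  have hsplit : ∀ u v, (if (u ∈ A ∧ v ∈ B) ∨ (u ∈ B ∧ v ∈ A) then x u * x v else 0) =
      (if u ∈ A ∧ v ∈ B then x u * x v else 0) + (if u ∈ B ∧ v ∈ A then x u * x v else 0) := by
    intro u v
    by_cases h : u ∈ A ∧ v ∈ B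
    · have : ¬(u ∈ B ∧ v ∈ A) := fun h' ↦ disjoint_left.mp hAB h.1 h'.1
      simp [h, this]
    · simp [h]
  simp only [hsplit, sum_add_distrib, sum_sum_ite_mem_and_mem]
  rw [mul_comm (∑ v ∈ B, x v), two_mul]

variable {κ : Type*} [Fintype κ] (X Y : κ → Finset α)
  (hdisj : ∀ k, Disjoint (X k) (Y k))
  (hcover : ∀ u v : α, u ≠ v → ∃! k, (u ∈ X k ∧ v ∈ Y k) ∨ (u ∈ Y k ∧ v ∈ X k))
include hdisj hcover

omit [Fintype α] in
theorem sum_ite_biclique_partition_eq (u v : α) (r : R) :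
    ∑ k, (if (u ∈ X k ∧ v ∈ Y k) ∨ (u ∈ Y k ∧ v ∈ X k) then r else 0) =
      if u = v then 0 else r := by
  split_ifs with huv
  · subst huv
    refine sum_eq_zero fun k _ ↦ if_neg ?_
    rintro (⟨hX, hY⟩ | ⟨hY, hX⟩) <;> exact disjoint_left.mp (hdisj k) hX hY
  · obtain ⟨k, hk, huniq⟩ := hcover u v huv
    rw [sum_eq_single k (fun j _ hj ↦ if_neg (mt (huniq j) hj)) (by simp), if_pos hk]

theorem sq_sum_eq_sum_mul_self_add_biclique_partition (x : α → R) :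
    (∑ u, x u) ^ 2 = ∑ u, x u * x u + 2 * ∑ k, (∑ u ∈ X k, x u) * ∑ v ∈ Y k, x v := by
  have hsplit : ∀ u v, x u * x v = (if u = v then x u * x v else 0) +
      ∑ k, (if (u ∈ X k ∧ v ∈ Y k) ∨ (u ∈ Y k ∧ v ∈ X k) then x u * x v else 0) := by
    intro u v
    rw [sum_ite_biclique_partition_eq X Y hdisj hcover]
    split_ifs <;> simp
  calc (∑ u, x u) ^ 2 = ∑ u, ∑ v, x u * x v := by rw [sq, Fintype.sum_mul_sum]
    _ = ∑ u, ∑ v, ((if u = v then x u * x v else 0) +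
      ∑ k, (if (u ∈ X k ∧ v ∈ Y k) ∨ (u ∈ Y k ∧ v ∈ X k) then x u * x v else 0)) := by
        simp only [← hsplit]
    _ = _ := by
      simp only [sum_add_distrib, sum_ite_eq, mem_univ, if_true]
      rw [mul_sum]
      congr 1
      rw [(sum_congr rfl fun u _ ↦ sum_comm).trans sum_comm]
      exact sum_congr rfl fun k _ ↦ sum_sum_ite_biclique _ _ (hdisj k) x

end BicliquePartition

/-- Graham–Pollak theorem: if the edge set of the complete graph on `n` vertices is
partitioned into `m` complete bipartite graphs, then `m ≥ n - 1`. -/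
theorem graham_pollak (n m : ℕ) (X Y : Fin m → Finset (Fin n))
    (hdisj : ∀ k, X k ∩ Y k = ∅)
    (hcover : ∀ u v : Fin n, u ≠ v →
      ∃! k : Fin m, (u ∈ X k ∧ v ∈ Y k) ∨ (u ∈ Y k ∧ v ∈ X k)) :
    n - 1 ≤ m := by
  by_contra! hlt
  obtain ⟨x, hx0, hx⟩ := exists_ne_zero_forall_sum_eq_zero (K := ℝ)
    (fun k : Option (Fin m) ↦ k.elim univ X)
    (by simp only [Fintype.card_option, Fintype.card_fin]; omega)
  have hsq : ∑ u, x u * x u = 0 := by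
    have hsum : ∑ u, x u = 0 := hx none
    have hX : ∀ k, ∑ u ∈ X k, x u = 0 := fun k ↦ hx (some k)
    simpa [hsum, hX] using
      (sq_sum_eq_sum_mul_self_add_biclique_partition X Y
        (fun k ↦ disjoint_iff_inter_eq_empty.mpr (hdisj k)) hcover x).symm
  exact hx0 (funext fun u ↦ (sum_mul_self_eq_zero_iff _ x).mp hsq u (mem_univ u))
end

section
/- (Fisher's inequality, nonuniform version.) Let A₁, …, A_m be pairwise distinct nonempty subsets of an n-element set and λ a natural number such that for all i ≠ j the cardinality of Aᵢ ∩ Aⱼ equals λ. Then m ≤ n. -/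
/-- Fisher's inequality (nonuniform version): if `A₁, …, A_m` are pairwise distinct
nonempty subsets of an `n`-element set whose pairwise intersections all have the same
cardinality `l`, then `m ≤ n`. -/
theorem fisher_inequality (n m : ℕ) (l : ℕ) (A : Fin m → Finset (Fin n))
    (hA : Function.Injective A) (hne : ∀ i, (A i).Nonempty)
    (hint : ∀ i j : Fin m, i ≠ j → (A i ∩ A j).card = l) :
    m ≤ n := by
  rcases Nat.lt_or_ge m 2 with hm | hm
  · interval_cases m
    · exact Nat.zero_le n
    · have h1 : 0 < (A 0).card := (hne 0).card_pos
      have h2 : (A 0).card ≤ n := by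
        simpa using Finset.card_le_card (Finset.subset_univ (A 0))
      omega
  · have hl : ∀ i : Fin m, l ≤ (A i).card := by
      intro i
      obtain ⟨j, hj⟩ : ∃ j : Fin m, j ≠ i := by
        by_cases h : i = ⟨0, by omega⟩
        · exact ⟨⟨1, by omega⟩, by subst h; simp [Fin.ext_iff]⟩
        · exact ⟨⟨0, by omega⟩, fun hh => h hh.symm⟩
      calc l = (A i ∩ A j).card := (hint i j hj.symm).symm
        _ ≤ (A i).card := Finset.card_le_card Finset.inter_subset_left
    set v : Fin m → (Fin n → ℝ) := fun i x => if x ∈ A i then (1:ℝ) else 0 with hv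
    have hli : LinearIndependent ℝ v := by
      rw [Fintype.linearIndependent_iff]
      intro c hc
      have hg : ∀ x : Fin n, ∑ i, c i * (if x ∈ A i then (1:ℝ) else 0) = 0 := by
        intro x
        have := congrFun hc x
        simpa [v] using this
      have key : ∀ i j : Fin m, ((A i ∩ A j).card : ℝ)
          = ∑ x : Fin n, (if x ∈ A i then (1:ℝ) else 0) * (if x ∈ A j then (1:ℝ) else 0) := by
        intro i j
        have h1 : ∀ x : Fin n, (if x ∈ A i then (1:ℝ) else 0) * (if x ∈ A j then (1:ℝ) else 0)
            = if x ∈ A i ∩ A j then (1:ℝ) else 0 := by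
          intro x
          by_cases h1 : x ∈ A i <;> by_cases h2 : x ∈ A j <;> simp [h1, h2]
        rw [Finset.sum_congr rfl fun x _ => h1 x]
        simp only [Finset.sum_ite_mem, Finset.univ_inter, Finset.sum_const, nsmul_eq_mul, mul_one]
      have hQ : ∑ i, ∑ j, c i * c j * ((A i ∩ A j).card : ℝ) = 0 := by
        have e1 : ∑ i, ∑ j, c i * c j * ((A i ∩ A j).card : ℝ)
            = ∑ x : Fin n, (∑ i, c i * (if x ∈ A i then (1:ℝ) else 0)) ^ 2 := by
          calc ∑ i, ∑ j, c i * c j * ((A i ∩ A j).card : ℝ)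
              = ∑ i, ∑ j, ∑ x : Fin n,
                  (c i * (if x ∈ A i then (1:ℝ) else 0)) * (c j * (if x ∈ A j then (1:ℝ) else 0)) := by
                refine Finset.sum_congr rfl fun i _ => Finset.sum_congr rfl fun j _ => ?_
                rw [key, Finset.mul_sum]
                exact Finset.sum_congr rfl fun x _ => by ring
            _ = ∑ i, ∑ x : Fin n, ∑ j,
                  (c i * (if x ∈ A i then (1:ℝ) else 0)) * (c j * (if x ∈ A j then (1:ℝ) else 0)) :=
                Finset.sum_congr rfl fun i _ => Finset.sum_comm
            _ = ∑ x : Fin n, ∑ i, ∑ j,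
                  (c i * (if x ∈ A i then (1:ℝ) else 0)) * (c j * (if x ∈ A j then (1:ℝ) else 0)) :=
                Finset.sum_comm
            _ = ∑ x : Fin n, (∑ i, c i * (if x ∈ A i then (1:ℝ) else 0)) ^ 2 := by
                refine Finset.sum_congr rfl fun x _ => ?_
                rw [sq, Finset.sum_mul_sum]
        rw [e1]
        exact Finset.sum_eq_zero fun x _ => by rw [hg x]; ring
      -- rewrite Q
      set S : ℝ := ∑ i, c i with hS
      have hrw : ∑ i, ∑ j, c i * c j * ((A i ∩ A j).card : ℝ)
          = (∑ i, (c i)^2 * (((A i).card : ℝ) - l)) + l * S ^ 2 := by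
        have hS2 : (l : ℝ) * S ^ 2 = ∑ i, ∑ j, c i * c j * (l : ℝ) := by
          rw [sq, hS, Finset.sum_mul_sum]
          simp only [Finset.mul_sum]
          rw [Finset.sum_comm]
          refine (Finset.sum_comm).trans ?_
          refine Finset.sum_congr rfl fun i _ => Finset.sum_congr rfl fun j _ => ?_
          ring
        rw [hS2, ← Finset.sum_add_distrib]
        refine Finset.sum_congr rfl fun i _ => ?_
        have hterm : ∀ j : Fin m, c i * c j * ((A i ∩ A j).card : ℝ)
            = (if j = i then (c i)^2 * (((A i).card : ℝ) - l) else 0) + c i * c j * l := by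
          intro j
          by_cases hji : j = i
          · subst hji
            rw [Finset.inter_self]
            simp only [if_pos rfl, if_true]
            ring
          · rw [hint i j (fun h => hji h.symm)]
            simp [hji]
        rw [Finset.sum_congr rfl fun j _ => hterm j, Finset.sum_add_distrib,
          Finset.sum_ite_eq' Finset.univ i]
        simp
      rw [hrw] at hQ
      have hterm_nonneg : ∀ i ∈ Finset.univ, (0:ℝ) ≤ (c i)^2 * (((A i).card : ℝ) - l) := by
        intro i _
        apply mul_nonneg (sq_nonneg _)
        have := hl i
        have : (l : ℝ) ≤ ((A i).card : ℝ) := by exact_mod_cast this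
        linarith
      have hsum_nonneg : (0:ℝ) ≤ ∑ i, (c i)^2 * (((A i).card : ℝ) - l) :=
        Finset.sum_nonneg hterm_nonneg
      have hlS : (0:ℝ) ≤ (l:ℝ) * S ^ 2 := mul_nonneg (by positivity) (sq_nonneg _)
      have hsum0 : ∑ i, (c i)^2 * (((A i).card : ℝ) - l) = 0 := by linarith
      have hlS0 : (l:ℝ) * S ^ 2 = 0 := by linarith
      have heach : ∀ i : Fin m, (c i)^2 * (((A i).card : ℝ) - l) = 0 := by
        have := (Finset.sum_eq_zero_iff_of_nonneg hterm_nonneg).mp hsum0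
        intro i; exact this i (Finset.mem_univ i)
      by_cases hex : ∃ k : Fin m, (A k).card = l
      · obtain ⟨k, hk⟩ := hex
        have hlpos : 0 < l := hk ▸ (hne k).card_pos
        have huniq : ∀ i : Fin m, i ≠ k → (A i).card ≠ l := by
          intro i hik hi
          have hsubk : A k ∩ A i = A k := by
            apply Finset.eq_of_subset_of_card_le Finset.inter_subset_left
            rw [hint k i (fun h => hik h.symm), hk]
          have hsub : A k ⊆ A i := by
            rw [← hsubk]; exact Finset.inter_subset_right
          have : A k = A i := Finset.eq_of_subset_of_card_le hsub (by rw [hk, hi])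
          exact hik (hA this).symm
        have hci : ∀ i : Fin m, i ≠ k → c i = 0 := by
          intro i hik
          have h1 := heach i
          have h2 : ((A i).card : ℝ) - l ≠ 0 := by
            have := huniq i hik
            have hle := hl i
            have : l < (A i).card := lt_of_le_of_ne hle (fun h => (huniq i hik) h.symm)
            have : (l:ℝ) < ((A i).card : ℝ) := by exact_mod_cast this
            linarith
          have := mul_eq_zero.mp h1
          rcases this with h | h
          · exact pow_eq_zero_iff (by norm_num) |>.mp h
          · exact absurd h h2
        have hSck : S = c k := by
          rw [hS]
          rw [Finset.sum_eq_single k]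
          · intro j _ hj; exact hci j hj
          · simp
        have hS0 : S = 0 := by
          rcases mul_eq_zero.mp hlS0 with h | h
          · exact absurd h (by positivity)
          · exact pow_eq_zero_iff (by norm_num) |>.mp h
        intro i
        by_cases hik : i = k
        · rw [hik, ← hSck, hS0]
        · exact hci i hik
      · push_neg at hex
        intro i
        have h1 := heach i
        have h2 : ((A i).card : ℝ) - l ≠ 0 := by
          have hlt : l < (A i).card := lt_of_le_of_ne (hl i) (fun h => hex i h.symm)
          have : (l:ℝ) < ((A i).card : ℝ) := by exact_mod_cast hlt
          linarith
        rcases mul_eq_zero.mp h1 with h | h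
        · exact pow_eq_zero_iff (by norm_num) |>.mp h
        · exact absurd h h2
    have := hli.fintype_card_le_finrank
    simpa using this
end

section
/- (Low-degree OR representation modulo 6, Barrington–Beigel–Rudich.) There exists a constant c such that for every natural number k there is a polynomial g in k variables over ℤ/6ℤ of total degree at most c·(√k + 1) which represents OR on Boolean inputs: for every assignment x ∈ {0,1}^k (viewing 0 and 1 as elements of ℤ/6ℤ), g(x) = 0 if and only if xᵢ = 0 for every i. -/
/-!
On a Boolean point with `n` ones, `esymm m` evaluates to `n.choose m`, and by Lucas's theorem
`n.choose (p ^ i)` is the `i`-th base-`p` digit of `n` modulo `p`. By Fermat, the product of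
`1 - esymm (p ^ i) ^ (p - 1)` over `i < a` is therefore, modulo `p`, the indicator of `p ^ a ∣ n`,
and its degree is at most `p ^ a - 1`. Choosing `2 ^ a` and `3 ^ b` just above `√k` and writing
`T₂`, `T₃` for the corresponding products, `3 (1 - T₂) + 2 (1 - T₃)` vanishes in `ℤ/6ℤ` iff
`2 ^ a * 3 ^ b ∣ n`, i.e. iff `n = 0`, because `n ≤ k < 2 ^ a * 3 ^ b`.
-/

open Finset MvPolynomial

section Boolean

variable {σ R : Type*} [Fintype σ] [CommSemiring R]

theorem eval_esymm_of_boolean [DecidableEq R] {x : σ → R} (hx : ∀ i, x i = 0 ∨ x i = 1) (m : ℕ) :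
    eval x (esymm σ R m) = ((#{i | x i = 1}).choose m : R) := by
  classical
  have hterm (t : Finset σ) :
      ∏ i ∈ t, x i = if t ⊆ ({i | x i = 1} : Finset σ) then 1 else 0 := by
    split_ifs with ht
    · exact prod_eq_one fun i hi => by simpa using ht hi
    · obtain ⟨i, hi, hne⟩ := not_subset.mp ht
      exact prod_eq_zero hi ((hx i).resolve_right fun h => hne (by simp [h]))
  simp only [esymm, map_sum, map_prod, eval_X, hterm, sum_boole, ← card_powersetCard]
  congr 2
  ext t
  simp [and_comm]

theorem isHomogeneous_esymm (m : ℕ) : (esymm σ R m).IsHomogeneous m :=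
  IsHomogeneous.sum _ _ _ fun t ht => by
    simpa [(mem_powersetCard.mp ht).2] using
      IsHomogeneous.prod t _ _ fun i _ => isHomogeneous_X R i

theorem card_filter_eq_one_eq_zero_iff [DecidableEq R] [Nontrivial R] {x : σ → R}
    (hx : ∀ i, x i = 0 ∨ x i = 1) :
    #{i | x i = 1} = 0 ↔ ∀ i, x i = 0 := by
  simp only [card_eq_zero, filter_eq_empty_iff, mem_univ, true_imp_iff]
  exact forall_congr' fun i => ⟨(hx i).resolve_right, fun h => by simp [h]⟩

end Boolean

theorem Nat.pow_dvd_iff_forall_dvd_choose_pow {p : ℕ} [Fact p.Prime] {a n : ℕ} :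
    p ^ a ∣ n ↔ ∀ i < a, p ∣ n.choose (p ^ i) := by
  induction a generalizing n with
  | zero => simp
  | succ a ih =>
    have hp : 0 < p := (Fact.out : p.Prime).pos
    -- Lucas's theorem; the lowest base-`p` digit of `p ^ (i + 1)` is `0`.
    have lucas (i : ℕ) : n.choose (p ^ (i + 1)) ≡ (n / p).choose (p ^ i) [MOD p] := by
      simpa [pow_succ, Nat.mul_div_cancel _ hp] using
        (Choose.choose_modEq_choose_mod_mul_choose_div_nat (n := n) (k := p ^ (i + 1)) (p := p))
    rw [Nat.forall_lt_succ_left, pow_zero, Nat.choose_one_right, pow_succ']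
    simp only [fun i => (lucas i).dvd_iff dvd_rfl, ← ih]
    constructor
    · intro h
      have hpn : p ∣ n := dvd_trans (dvd_mul_right _ _) h
      exact ⟨hpn, (Nat.dvd_div_iff_mul_dvd hpn).mpr h⟩
    · rintro ⟨hpn, h⟩
      exact (Nat.dvd_div_iff_mul_dvd hpn).mp h

theorem ZMod.prod_one_sub_choose_pow_eq_ite {p : ℕ} [Fact p.Prime] (n a : ℕ) :
    ∏ i ∈ range a, (1 - (n.choose (p ^ i) : ZMod p) ^ (p - 1)) = if p ^ a ∣ n then 1 else 0 := by
  split_ifs with h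
  · refine prod_eq_one fun i hi => ?_
    have : p ∣ n.choose (p ^ i) := Nat.pow_dvd_iff_forall_dvd_choose_pow.mp h i (mem_range.mp hi)
    simp [(ZMod.natCast_eq_zero_iff _ p).mpr this,
      Nat.sub_ne_zero_of_lt (Fact.out : p.Prime).one_lt]
  · obtain ⟨i, hi, hndvd⟩ := by simpa using mt Nat.pow_dvd_iff_forall_dvd_choose_pow.mpr h
    refine prod_eq_zero (mem_range.mpr hi) ?_
    rw [ZMod.pow_card_sub_one_eq_one ((ZMod.natCast_eq_zero_iff _ p).not.mpr hndvd), sub_self]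

section PowDvdTest

variable (σ R : Type*) [Fintype σ] [CommRing R]

noncomputable def powDvdTest (p a : ℕ) : MvPolynomial σ R :=
  ∏ i ∈ range a, (1 - esymm σ R (p ^ i) ^ (p - 1))

variable {σ R}

theorem totalDegree_powDvdTest_le {p : ℕ} (hp : 1 ≤ p) (a : ℕ) :
    (powDvdTest σ R p a).totalDegree ≤ p ^ a - 1 :=
  calc (powDvdTest σ R p a).totalDegree
      ≤ ∑ i ∈ range a, (1 - esymm σ R (p ^ i) ^ (p - 1)).totalDegree := totalDegree_finsetProd _ _
    _ ≤ ∑ i ∈ range a, p ^ i * (p - 1) := by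
        refine sum_le_sum fun i _ => (totalDegree_sub _ _).trans ?_
        rw [totalDegree_one, Nat.zero_max]
        exact ((isHomogeneous_esymm (σ := σ) (R := R) (p ^ i)).pow (p - 1)).totalDegree_le
    _ = p ^ a - 1 := by rw [← sum_mul, geom_sum_mul_of_one_le hp]

theorem map_eval_powDvdTest [DecidableEq R] {p : ℕ} [Fact p.Prime] (f : R →+* ZMod p)
    {x : σ → R} (hx : ∀ i, x i = 0 ∨ x i = 1) (a : ℕ) :
    f (eval x (powDvdTest σ R p a)) = if p ^ a ∣ #{i | x i = 1} then 1 else 0 := by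
  simp [powDvdTest, eval_esymm_of_boolean hx, ZMod.prod_one_sub_choose_pow_eq_ite]

end PowDvdTest

theorem Nat.exists_lt_pow_le_mul_succ {p : ℕ} (hp : 1 < p) (s : ℕ) :
    ∃ a, s < p ^ a ∧ p ^ a ≤ p * (s + 1) :=
  ⟨Nat.log p (s + 1) + 1, (Nat.lt_succ_self s).trans (Nat.lt_pow_succ_log_self hp _), by
    rw [pow_succ']; exact Nat.mul_le_mul_left p (Nat.pow_log_le_self p s.succ_ne_zero)⟩

theorem ZMod.three_mul_add_two_mul_eq_zero_iff (u v : ZMod 6) :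
    3 * u + 2 * v = 0 ↔
      ZMod.castHom (by norm_num : 2 ∣ 6) (ZMod 2) u = 0 ∧
        ZMod.castHom (by norm_num : 3 ∣ 6) (ZMod 3) v = 0 := by
  revert u v; decide

/-- Barrington–Beigel–Rudich: there is a constant `c` such that for every `k` there is a
polynomial over `ℤ/6ℤ` in `k` variables of total degree at most `c·(√k + 1)` representing
OR on Boolean inputs: `g(x) = 0` iff all `xᵢ = 0`. -/
theorem low_degree_or_mod_six :
    ∃ c : ℕ, ∀ k : ℕ, ∃ g : MvPolynomial (Fin k) (ZMod 6),
      g.totalDegree ≤ c * (Nat.sqrt k + 1) ∧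
      ∀ x : Fin k → ZMod 6, (∀ i, x i = 0 ∨ x i = 1) →
        (MvPolynomial.eval x g = 0 ↔ ∀ i, x i = 0) := by
  have : Nontrivial (ZMod 6) := ⟨0, 1, by decide⟩
  refine ⟨3, fun k => ?_⟩
  obtain ⟨a, hsa, ha⟩ := Nat.exists_lt_pow_le_mul_succ (by norm_num : 1 < 2) k.sqrt
  obtain ⟨b, hsb, hb⟩ := Nat.exists_lt_pow_le_mul_succ (by norm_num : 1 < 3) k.sqrt
  refine ⟨(3 : ZMod 6) • (1 - powDvdTest _ _ 2 a) + (2 : ZMod 6) • (1 - powDvdTest _ _ 3 b),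
    ?_, fun x hx => ?_⟩
  · have hdeg (c : ZMod 6) (P : MvPolynomial (Fin k) (ZMod 6)) :
        (c • (1 - P)).totalDegree ≤ P.totalDegree :=
      (totalDegree_smul_le _ _).trans <| (totalDegree_sub _ _).trans (by simp)
    refine (totalDegree_add _ _).trans (max_le ((hdeg _ _).trans ?_) ((hdeg _ _).trans ?_))
    · have := totalDegree_powDvdTest_le (σ := Fin k) (R := ZMod 6) (by norm_num : 1 ≤ 2) a
      omega
    · have := totalDegree_powDvdTest_le (σ := Fin k) (R := ZMod 6) (by norm_num : 1 ≤ 3) b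
      omega
  · have hk : k < 2 ^ a * 3 ^ b := (Nat.lt_succ_sqrt k).trans_le (Nat.mul_le_mul hsa hsb)
    have hn : #{i | x i = 1} ≤ k := (card_filter_le _ _).trans_eq (card_fin k)
    rw [← card_filter_eq_one_eq_zero_iff hx, map_add, smul_eval, smul_eval,
      ZMod.three_mul_add_two_mul_eq_zero_iff]
    simp only [map_sub, map_one, map_eval_powDvdTest _ hx, sub_eq_zero,
      eq_comm (a := (1 : ZMod _)), ite_eq_left_iff, zero_ne_one, imp_false, not_not]
    refine ⟨fun ⟨h2, h3⟩ => Nat.eq_zero_of_dvd_of_lt ?_ (hn.trans_lt hk), fun h => by simp [h]⟩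
    exact (Nat.Coprime.pow a b (by norm_num)).mul_dvd_of_dvd_of_dvd h2 h3
end
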